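/- arXiv:2505.02682 — 11 statements merged into one kernel-verified Lean document; each statement's English description precedes it below -/
import Mathlib

section
/- Let f be an unbounded modulus function. Then the intersection over all weight functions g ∈ G of the modular simple density ideals Z_g(f) equals Fin, the ideal of all finite subsets of ℕ. -/
open Filter Topology

/-- `cnt C k` is the number of elements of `C` in `[0, k-1]`. -/
noncomputable def cnt (C : Set ℕ) (k : ℕ) : ℕ := (C ∩ Set.Iio k).ncard

/-- A modulus function `f : [0,∞) → [0,∞)`: nonnegative, increasing, subadditive,
vanishing exactly at `0`, and right continuous at `0`. -/
def IsModulus (f : ℝ → ℝ) : Prop :=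
  (∀ x, 0 ≤ x → 0 ≤ f x) ∧ MonotoneOn f (Set.Ici 0) ∧
  (∀ x y, 0 ≤ x → 0 ≤ y → f (x + y) ≤ f x + f y) ∧
  (∀ x, 0 ≤ x → (f x = 0 ↔ x = 0)) ∧ ContinuousWithinAt f (Set.Ici 0) 0

/-- `f` is unbounded on `[0,∞)`. -/
def IsUnboundedMod (f : ℝ → ℝ) : Prop := ∀ M : ℝ, ∃ x : ℝ, 0 ≤ x ∧ M < f x

/-- The family `G` of weight functions: `g : ℕ → [0,∞)` with `g(k) → ∞` and
`k / g(k)` not converging to `0`. -/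
def InG (g : ℕ → ℝ) : Prop :=
  (∀ k, 0 ≤ g k) ∧ Tendsto g atTop atTop ∧
  ¬ Tendsto (fun k : ℕ => (k : ℝ) / g k) atTop (nhds 0)

/-- The modular simple density ideal `Z_g(f)`. -/
def Zgf (f : ℝ → ℝ) (g : ℕ → ℝ) : Set (Set ℕ) :=
  {C | Tendsto (fun k => f (cnt C k) / f (g k)) atTop (nhds 0)}

lemma cnt_le (C : Set ℕ) (k : ℕ) : cnt C k ≤ k := by
  have h1 : cnt C k ≤ (Set.Iio k : Set ℕ).ncard :=
    Set.ncard_le_ncard Set.inter_subset_right (Set.finite_Iio k)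
  simpa [Set.ncard_eq_toFinset_card'] using h1

lemma cnt_tendsto (C : Set ℕ) (h : C.Infinite) :
    Tendsto (fun k => cnt C k) atTop atTop := by
  rw [tendsto_atTop_atTop]
  intro n
  obtain ⟨s, hs, hcard⟩ := h.exists_subset_card_eq n
  refine ⟨(s.sup id) + 1, fun k hk => ?_⟩
  have hsub : (↑s : Set ℕ) ⊆ C ∩ Set.Iio k := by
    intro x hx
    refine ⟨hs hx, ?_⟩
    have : x ≤ s.sup id := Finset.le_sup (f := id) hx
    simp only [Set.mem_Iio]; omega
  simpa [cnt, hcard] using (Set.ncard_le_ncard hsub ((Set.finite_Iio k).inter_of_right C))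

lemma mod_tendsto (f : ℝ → ℝ) (hf : IsModulus f) (hfu : IsUnboundedMod f) :
    Tendsto f atTop atTop := by
  rw [tendsto_atTop_atTop]
  intro M
  obtain ⟨x, hx0, hx⟩ := hfu M
  refine ⟨x, fun y hy => le_of_lt (lt_of_lt_of_le hx ?_)⟩
  exact hf.2.1 hx0 (le_trans hx0 hy) hy

lemma mod_pos (f : ℝ → ℝ) (hf : IsModulus f) {x : ℝ} (hx0 : 0 ≤ x) (hx : x ≠ 0) :
    0 < f x := by
  have h0 := hf.1 x hx0
  rcases eq_or_lt_of_le h0 with h | h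
  · exact absurd ((hf.2.2.2.1 x hx0).1 h.symm) hx
  · exact h

theorem stmt0 (f : ℝ → ℝ) (hf : IsModulus f) (hfu : IsUnboundedMod f) :
    {C : Set ℕ | ∀ g : ℕ → ℝ, InG g → C ∈ Zgf f g} = {C : Set ℕ | C.Finite} := by
  ext C
  simp only [Set.mem_setOf_eq]
  constructor
  · intro h
    by_contra hC
    have hCinf : C.Infinite := hC
    set g : ℕ → ℝ := fun k => (cnt C k : ℝ) with hg
    have hgt : Tendsto g atTop atTop :=
      (tendsto_natCast_atTop_atTop).comp (cnt_tendsto C hCinf)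
    have hev : ∀ᶠ k in atTop, (1:ℝ) ≤ g k := hgt.eventually_ge_atTop 1
    have hInG : InG g := by
      refine ⟨fun k => Nat.cast_nonneg _, hgt, fun hcon => ?_⟩
      have h1 : ∀ᶠ k : ℕ in atTop, (k : ℝ) / g k < 1 :=
        hcon.eventually (gt_mem_nhds one_pos)
    
      have h2 : ∀ᶠ k : ℕ in atTop, (1:ℝ) ≤ (k : ℝ) / g k := by
        filter_upwards [hev] with k hk
        rw [le_div_iff₀ (lt_of_lt_of_le one_pos hk)]
        have : cnt C k ≤ k := cnt_le C k
        simp only [hg, one_mul]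
        exact_mod_cast this
      obtain ⟨k, hk1, hk2⟩ := (h1.and h2).exists
      linarith
    have := h g hInG
    have hone : ∀ᶠ k in atTop, f (cnt C k) / f (g k) = 1 := by
      filter_upwards [hev] with k hk
      have hgk : (0:ℝ) < g k := lt_of_lt_of_le one_pos hk
      have hpos : 0 < f (g k) := mod_pos f hf hgk.le (ne_of_gt hgk)
      have : f (↑(cnt C k)) = f (g k) := rfl
      rw [this, div_self (ne_of_gt hpos)]
    have hlt := this.eventually (gt_mem_nhds (show (0:ℝ) < 1/2 by norm_num))
    obtain ⟨k, hk1, hk2⟩ := (hone.and hlt).exists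
    rw [hk1] at hk2
    linarith
  · intro hC g hg
    have hfg : Tendsto (fun k => f (g k)) atTop atTop :=
      (mod_tendsto f hf hfu).comp hg.2.1
    have hbound : ∀ k, cnt C k ≤ C.ncard := fun k =>
      Set.ncard_le_ncard Set.inter_subset_left hC
    have hev : ∀ᶠ k in atTop, 0 < f (g k) := by
      filter_upwards [hfg.eventually_gt_atTop 0] with k hk using hk
    have hsq : Tendsto (fun k => f (C.ncard : ℝ) / f (g k)) atTop (nhds 0) :=
      tendsto_const_nhds.div_atTop hfg
    rw [Zgf, Set.mem_setOf_eq]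
    apply squeeze_zero' (g := fun k => f (C.ncard : ℝ) / f (g k)) ?_ ?_ hsq
    · filter_upwards [hev] with k hk
      exact div_nonneg (hf.1 _ (Nat.cast_nonneg _)) hk.le
    · filter_upwards [hev] with k hk
      exact div_le_div_of_nonneg_right
        (hf.2.1 (Set.mem_Ici.mpr (Nat.cast_nonneg _)) (Set.mem_Ici.mpr (Nat.cast_nonneg _))
          (Nat.cast_le.mpr (hbound k))) hk.le
end

section
/- For the modulus function f(x) = log(1+x), the inclusion Z_ℓ(f) ⊆ Z_ℓ is strict; that is, there exists a set C ⊆ ℕ with liminf_{k→∞} |C ∩ [0,k-1]|/k = 0 but liminf_{k→∞} log(1+|C ∩ [0,k-1]|)/log(1+k) > 0. -/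
open Filter Topology

lemma cnt_sq (k : ℕ) (hk : 1 ≤ k) :
    cnt (Set.range (fun n : ℕ => n^2)) k = Nat.sqrt (k-1) + 1 := by
  have h : (Set.range (fun n : ℕ => n^2)) ∩ Set.Iio k
      = (fun n : ℕ => n^2) '' Set.Iio (Nat.sqrt (k-1) + 1) := by
    ext x
    simp only [Set.mem_inter_iff, Set.mem_range, Set.mem_Iio, Set.mem_image]
    constructor
    · rintro ⟨⟨n, rfl⟩, hx⟩
      refine ⟨n, ?_, rfl⟩
      have h2 : n ≤ Nat.sqrt (k-1) := Nat.le_sqrt.mpr (by have := sq n; omega)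
      omega
    · rintro ⟨n, hn, rfl⟩
      refine ⟨⟨n, rfl⟩, ?_⟩
      have h2 : n ≤ Nat.sqrt (k-1) := by omega
      have h3 := Nat.le_sqrt.mp h2
      have := sq n
      omega
  rw [cnt, h, Set.ncard_image_of_injective _ (fun a b hab => by
    simpa using Nat.pow_left_injective (by norm_num) hab)]
  rw [← Finset.coe_Iio, Set.ncard_coe_finset, Nat.card_Iio]

lemma cnt_sq_le (k : ℕ) (hk : 1 ≤ k) :
    (cnt (Set.range (fun n : ℕ => n^2)) k : ℝ) ≤ Real.sqrt k + 1 := by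
  rw [cnt_sq k hk]
  push_cast
  have h1 : (Nat.sqrt (k-1) : ℝ) ≤ Real.sqrt k := by
    rw [show (Nat.sqrt (k-1) : ℝ) = Real.sqrt ((Nat.sqrt (k-1) : ℝ)^2) by
      rw [Real.sqrt_sq (by positivity)]]
    apply Real.sqrt_le_sqrt
    have h0 := Nat.sqrt_le' (k-1)
    have hp := pow_two (Nat.sqrt (k-1))
    have h2 : Nat.sqrt (k-1) * Nat.sqrt (k-1) ≤ k := by omega
    have h3 : ((Nat.sqrt (k-1) : ℝ)) * (Nat.sqrt (k-1) : ℝ) ≤ k := by exact_mod_cast h2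
    nlinarith
  linarith

lemma k_le_cnt_sq (k : ℕ) (hk : 1 ≤ k) :
    (k : ℝ) ≤ (cnt (Set.range (fun n : ℕ => n^2)) k : ℝ)^2 := by
  rw [cnt_sq k hk]
  have h0 := Nat.lt_succ_sqrt' (k-1)
  have hp := pow_two (Nat.succ (Nat.sqrt (k-1)))
  simp only [Nat.succ_eq_add_one] at h0 hp
  have h2 : k ≤ (Nat.sqrt (k-1) + 1) * (Nat.sqrt (k-1) + 1) := by omega
  have h3 : (k : ℝ) ≤ ((Nat.sqrt (k-1) : ℝ) + 1) * ((Nat.sqrt (k-1) : ℝ) + 1) := by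
    exact_mod_cast h2
  push_cast
  nlinarith

lemma sqrt_tendsto : Tendsto (fun k : ℕ => Real.sqrt k) atTop atTop := by
  apply tendsto_atTop_atTop_of_monotone
  · intro a b hab
    exact Real.sqrt_le_sqrt (by exact_mod_cast hab)
  · intro b
    obtain ⟨n, hn⟩ := exists_nat_ge (b^2 + 1)
    refine ⟨n, ?_⟩
    have : b ≤ Real.sqrt (b^2 + 1) := by
      nlinarith [Real.sq_sqrt (by positivity : (0:ℝ) ≤ b^2+1),
        Real.sqrt_nonneg (b^2+1), sq_abs b, le_abs_self b]
    exact this.trans (Real.sqrt_le_sqrt hn)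

/-- For the modulus function `f(x) = log(1+x)`, the inclusion `Z_ℓ(f) ⊆ Z_ℓ` is strict:
there exists `C ⊆ ℕ` with `liminf |C ∩ [0,k-1]|/k = 0` but
`liminf log(1 + |C ∩ [0,k-1]|)/log(1+k) > 0`. -/
theorem stmt2 :
    ∃ C : Set ℕ,
      Filter.liminf (fun k : ℕ => (cnt C k : ℝ) / (k : ℝ)) Filter.atTop = 0 ∧
      0 < Filter.liminf
        (fun k : ℕ => Real.log (1 + (cnt C k : ℝ)) / Real.log (1 + (k : ℝ))) Filter.atTop := by
  refine ⟨Set.range (fun n : ℕ => n^2), ?_, ?_⟩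
  · -- density tends to 0
    have hT : Tendsto (fun k : ℕ => (cnt (Set.range (fun n : ℕ => n^2)) k : ℝ) / k)
        atTop (𝓝 0) := by
      have hg : Tendsto (fun k : ℕ => 2 / Real.sqrt k) atTop (𝓝 0) :=
        Tendsto.div_atTop tendsto_const_nhds sqrt_tendsto
      apply squeeze_zero' (by filter_upwards with k; positivity) ?_ hg
      filter_upwards [eventually_ge_atTop 1] with k hk
      have hk0 : (0:ℝ) < k := by exact_mod_cast hk
      have hs1 : (1:ℝ) ≤ Real.sqrt k := by
        rw [show (1:ℝ) = Real.sqrt 1 by simp]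
        exact Real.sqrt_le_sqrt (by exact_mod_cast hk)
      have hs0 : (0:ℝ) < Real.sqrt k := by linarith
      have hsq : Real.sqrt k * Real.sqrt k = k := Real.mul_self_sqrt hk0.le
      have hc := cnt_sq_le k hk
      have hc0 : (0:ℝ) ≤ (cnt (Set.range (fun n : ℕ => n^2)) k : ℝ) := Nat.cast_nonneg _
      rw [div_le_div_iff₀ hk0 hs0]
      nlinarith
    exact hT.liminf_eq
  · -- log ratio liminf ≥ 1/2
    set u : ℕ → ℝ := fun k =>
      Real.log (1 + (cnt (Set.range (fun n : ℕ => n^2)) k : ℝ)) / Real.log (1 + k) with hu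
    have hub : ∀ᶠ k : ℕ in atTop, u k ≤ 1 := by
      filter_upwards [eventually_ge_atTop 1] with k hk
      have hk1 : (1:ℝ) ≤ k := by exact_mod_cast hk
      have hlogk : 0 < Real.log (1 + (k:ℝ)) := Real.log_pos (by linarith)
      rw [hu]
      rw [div_le_one hlogk]
      apply Real.log_le_log (by positivity)
      have h := cnt_le (Set.range (fun n : ℕ => n^2)) k
      have h2 : (cnt (Set.range (fun n : ℕ => n^2)) k : ℝ) ≤ k := by exact_mod_cast h
      linarith
    have hlb : ∀ᶠ k : ℕ in atTop, (1/2 : ℝ) ≤ u k := by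
      filter_upwards [eventually_ge_atTop 1] with k hk
      have hk1 : (1:ℝ) ≤ k := by exact_mod_cast hk
      have hlogk : 0 < Real.log (1 + (k:ℝ)) := Real.log_pos (by linarith)
      set c : ℝ := (cnt (Set.range (fun n : ℕ => n^2)) k : ℝ) with hc
      have hc0 : 0 ≤ c := Nat.cast_nonneg _
      have hck : (k:ℝ) ≤ c^2 := k_le_cnt_sq k hk
      have hsqle : Real.sqrt (1 + k) ≤ 1 + c := by
        rw [show (1:ℝ) + c = Real.sqrt ((1+c)^2) by rw [Real.sqrt_sq (by linarith)]]
        exact Real.sqrt_le_sqrt (by nlinarith)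
      have hlog : Real.log (1 + (k:ℝ)) / 2 ≤ Real.log (1 + c) := by
        rw [← Real.log_sqrt (by linarith)]
        exact Real.log_le_log (Real.sqrt_pos.mpr (by linarith)) hsqle
      rw [hu, le_div_iff₀ hlogk]
      linarith
    have hcb : IsCoboundedUnder (· ≥ ·) atTop u :=
      (isBoundedUnder_of_eventually_le hub).isCoboundedUnder_ge
    have := le_liminf_of_le hcb hlb
    linarith
end

section
/- Let g ∈ H↑ (a nondecreasing ℕ-valued weight function) and let f be an unbounded modulus function. Let C ⊆ ℕ be an infinite set with increasing enumeration C = {c_0 < c_1 < c_2 < ⋯}. Then C ∈ Z_g(f) if and only if lim_{m→∞} f(|C ∩ [0, c_m - 1]|)/f(g(c_m)) = 0. -/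
/-!
If `c n < k ≤ c (n + 1)` then `C` has `n + 1` elements below `k`, so subadditivity of `f` and
monotonicity of `f` and `g` give `f (n + 1) / f (g k) ≤ (f n + f 1) / f (g (c n))`. The right-hand
side tends to `0`: `f n / f (g (c n))` is the given subsequence, and `f (g (c n)) → ∞` because `f`
is unbounded. The enumeration `c` is `Nat.nth (· ∈ C)` and `cnt C` is `Nat.count (· ∈ C)`.
-/

open Filter Topology

/-- `H↑`: nondecreasing `ℕ`-valued weight functions, i.e. monotone `g : ℕ → ℕ`
with `g(k) → ∞` and `k / g(k)` not converging to `0`. -/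
def InHup (g : ℕ → ℕ) : Prop :=
  Monotone g ∧ Tendsto g atTop atTop ∧
  ¬ Tendsto (fun k : ℕ => (k : ℝ) / (g k : ℝ)) atTop (nhds 0)

/-- The modular simple density ideal `Z_g(f)` for a `ℕ`-valued weight function. -/
def ZgfN (f : ℝ → ℝ) (g : ℕ → ℕ) : Set (Set ℕ) :=
  {C | Tendsto (fun k => f (cnt C k) / f (g k : ℝ)) atTop (nhds 0)}

open Nat

lemma IsModulus.nonneg {f : ℝ → ℝ} (hf : IsModulus f) {x : ℝ} (hx : 0 ≤ x) : 0 ≤ f x :=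
  hf.1 x hx

lemma IsModulus.mono {f : ℝ → ℝ} (hf : IsModulus f) {x y : ℝ} (hx : 0 ≤ x) (hxy : x ≤ y) :
    f x ≤ f y :=
  hf.2.1 hx (hx.trans hxy) hxy

lemma IsModulus.natCast_succ_le {f : ℝ → ℝ} (hf : IsModulus f) (n : ℕ) :
    f (n + 1 : ℕ) ≤ f n + f 1 := by
  push_cast
  exact hf.2.2.1 _ _ n.cast_nonneg zero_le_one

lemma IsModulus.tendsto_atTop {f : ℝ → ℝ} (hf : IsModulus f) (hfu : IsUnboundedMod f) :
    Tendsto f atTop atTop := by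
  refine Filter.tendsto_atTop.2 fun A => ?_
  obtain ⟨x, hx, hAx⟩ := hfu A
  filter_upwards [eventually_ge_atTop x] with y hy
  exact hAx.le.trans (hf.mono hx hy)

lemma cnt_eq_count (C : Set ℕ) [DecidablePred (· ∈ C)] (k : ℕ) :
    cnt C k = count (· ∈ C) k := by
  rw [count_eq_card_filter_range, cnt, ← Set.ncard_coe_finset]
  congr 1
  ext
  simp [and_comm]

lemma Nat.tendsto_count_atTop {p : ℕ → Prop} [DecidablePred p] (hp : (Set.ofPred p).Infinite) :
    Tendsto (count p) atTop atTop :=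
  (count_monotone p).tendsto_atTop_atTop fun n => ⟨nth p n, (count_nth_of_infinite hp n).ge⟩

theorem tendsto_count_div_of_tendsto_nth_div {f : ℝ → ℝ} {g : ℕ → ℕ} {p : ℕ → Prop}
    [DecidablePred p] (hf : IsModulus f) (hfu : IsUnboundedMod f) (hg_mono : Monotone g)
    (hg : Tendsto g atTop atTop) (hp : (Set.ofPred p).Infinite)
    (h : Tendsto (fun m : ℕ => f m / f (g (nth p m))) atTop (𝓝 0)) :
    Tendsto (fun k => f (count p k) / f (g k)) atTop (𝓝 0) := by
  have hden : Tendsto (fun m => f (g (nth p m))) atTop atTop :=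
    (hf.tendsto_atTop hfu).comp <|
      tendsto_natCast_atTop_atTop.comp (hg.comp (nth_strictMono hp).tendsto_atTop)
  have hbound : Tendsto (fun m : ℕ => (f m + f 1) / f (g (nth p m))) atTop (𝓝 0) := by
    simpa only [add_div, add_zero] using h.add (tendsto_const_nhds.div_atTop hden)
  have hpred : Tendsto (fun k => count p k - 1) atTop atTop :=
    (tendsto_sub_atTop_nat 1).comp (tendsto_count_atTop hp)
  refine squeeze_zero' (Eventually.of_forall fun k =>
    div_nonneg (hf.nonneg (Nat.cast_nonneg _)) (hf.nonneg (Nat.cast_nonneg _)))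
    ?_ (hbound.comp hpred)
  filter_upwards [(tendsto_count_atTop hp).eventually_ge_atTop 1,
    hpred.eventually (hden.eventually_gt_atTop 0)] with k hk hpos
  set n := count p k - 1
  have hlt : nth p n < k := nth_lt_of_lt_count (by omega)
  have hsucc : count p k = n + 1 := by omega
  rw [hsucc]
  exact div_le_div₀ (add_nonneg (hf.nonneg n.cast_nonneg) (hf.nonneg zero_le_one))
    (hf.natCast_succ_le n) hpos (hf.mono (Nat.cast_nonneg _) (by exact_mod_cast hg_mono hlt.le))

theorem stmt4 (f : ℝ → ℝ) (g : ℕ → ℕ) (hf : IsModulus f) (hfu : IsUnboundedMod f)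
    (hg : InHup g) (C : Set ℕ) (c : ℕ → ℕ) (hc : StrictMono c) (hC : Set.range c = C) :
    C ∈ ZgfN f g ↔
      Tendsto (fun m => f (cnt C (c m)) / f (g (c m) : ℝ)) atTop (nhds 0) := by
  classical
  refine ⟨fun h => h.comp hc.tendsto_atTop, fun h => ?_⟩
  have hinf : C.Infinite := hC ▸ Set.infinite_range_of_injective hc.injective
  obtain rfl : c = nth (· ∈ C) :=
    (hc.range_inj (nth_strictMono hinf)).1 (hC.trans (range_nth_of_infinite hinf).symm)
  simp only [cnt_eq_count, count_nth_of_infinite (p := (· ∈ C)) hinf] at h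
  simpa only [ZgfN, Set.mem_ofPred_eq, cnt_eq_count] using
    tendsto_count_div_of_tendsto_nth_div (p := (· ∈ C)) hf hfu hg.1 hg.2.1 hinf h
end

section
/- Let g, h ∈ H↑ (nondecreasing ℕ-valued weight functions) and let f be an unbounded modulus function. If Z_g(f) = Z_h(f), then Z_g(f) = Z_{max{g,h}}(f), where max{g,h} denotes the pointwise maximum of g and h. -/
open Filter Topology

namespace Stmt5Proof

variable {f : ℝ → ℝ}

lemma mod_nonneg (hf : IsModulus f) {x : ℝ} (hx : 0 ≤ x) : 0 ≤ f x := hf.1 x hx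

lemma mod_zero (hf : IsModulus f) : f 0 = 0 := (hf.2.2.2.1 0 le_rfl).2 rfl

lemma mod_mono (hf : IsModulus f) {a b : ℝ} (ha : 0 ≤ a) (hab : a ≤ b) : f a ≤ f b :=
  hf.2.1 ha (ha.trans hab) hab

lemma mod_pos (hf : IsModulus f) {x : ℝ} (hx : 0 < x) : 0 < f x := by
  rcases (hf.1 x hx.le).lt_or_eq with h | h
  · exact h
  · exact absurd ((hf.2.2.2.1 x hx.le).1 h.symm) hx.ne'

lemma mod_monoN (hf : IsModulus f) {a b : ℕ} (hab : a ≤ b) : f (a : ℝ) ≤ f (b : ℝ) :=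
  mod_mono hf (Nat.cast_nonneg a) (by exact_mod_cast hab)

lemma mod_addN (hf : IsModulus f) (a b : ℕ) : f ((a + b : ℕ) : ℝ) ≤ f a + f b := by
  push_cast
  exact hf.2.2.1 a b (Nat.cast_nonneg a) (Nat.cast_nonneg b)

lemma mod_sub (hf : IsModulus f) (a b : ℕ) : f a - f b ≤ f ((a - b : ℕ) : ℝ) := by
  rcases le_total b a with hba | hab
  · have h0 : ((a : ℝ)) = ((a - b : ℕ) : ℝ) + (b : ℝ) := by
      push_cast [hba]; ring
    have h2 := hf.2.2.1 ((a - b : ℕ) : ℝ) b (Nat.cast_nonneg _) (Nat.cast_nonneg _)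
    rw [h0]
    linarith
  · have h1 : f a ≤ f b := mod_monoN hf hab
    have h2 : 0 ≤ f ((a - b : ℕ) : ℝ) := mod_nonneg hf (Nat.cast_nonneg _)
    linarith

lemma mod_tendstoN (hf : IsModulus f) (hfu : IsUnboundedMod f) :
    Tendsto (fun n : ℕ => f n) atTop atTop := by
  refine tendsto_atTop.2 fun M => ?_
  obtain ⟨x, hx0, hxM⟩ := hfu M
  refine eventually_atTop.2 ⟨⌈x⌉₊, fun n hn => ?_⟩
  exact hxM.le.trans (mod_mono hf hx0 ((Nat.le_ceil x).trans (by exact_mod_cast hn)))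

/-! ### counting function lemmas -/

lemma cnt_finite (C : Set ℕ) (k : ℕ) : (C ∩ Set.Iio k).Finite :=
  (Set.finite_Iio k).subset Set.inter_subset_right

lemma cnt_zero (C : Set ℕ) : cnt C 0 = 0 := by
  have : C ∩ Set.Iio 0 = ∅ := by ext n; simp
  simp [cnt, this]

lemma cnt_succ_mem (C : Set ℕ) (k : ℕ) (hk : k ∈ C) :
    cnt C (k + 1) = cnt C k + 1 := by
  have hset : C ∩ Set.Iio (k + 1) = insert k (C ∩ Set.Iio k) := by
    ext n
    simp only [Set.mem_inter_iff, Set.mem_Iio, Set.mem_insert_iff]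
    constructor
    · rintro ⟨hnC, hn⟩
      rcases Nat.lt_succ_iff_lt_or_eq.1 hn with h | h
      · exact Or.inr ⟨hnC, h⟩
      · exact Or.inl h
    · rintro (rfl | ⟨hnC, hn⟩)
      · exact ⟨hk, Nat.lt_succ_self _⟩
      · exact ⟨hnC, hn.trans (Nat.lt_succ_self _)⟩
  show (C ∩ Set.Iio (k + 1)).ncard = (C ∩ Set.Iio k).ncard + 1
  rw [hset, Set.ncard_insert_of_notMem (by simp) (cnt_finite C k)]

lemma cnt_succ_notMem (C : Set ℕ) (k : ℕ) (hk : k ∉ C) :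
    cnt C (k + 1) = cnt C k := by
  have hset : C ∩ Set.Iio (k + 1) = C ∩ Set.Iio k := by
    ext n
    simp only [Set.mem_inter_iff, Set.mem_Iio]
    constructor
    · rintro ⟨hnC, hn⟩
      rcases Nat.lt_succ_iff_lt_or_eq.1 hn with h | h
      · exact ⟨hnC, h⟩
      · subst h; exact absurd hnC hk
    · rintro ⟨hnC, hn⟩; exact ⟨hnC, hn.trans (Nat.lt_succ_self _)⟩
  show (C ∩ Set.Iio (k + 1)).ncard = (C ∩ Set.Iio k).ncard
  rw [hset]

lemma cnt_succ_le (C : Set ℕ) (k : ℕ) :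
    cnt C k ≤ cnt C (k + 1) ∧ cnt C (k + 1) ≤ cnt C k + 1 := by
  rcases Classical.em (k ∈ C) with hk | hk
  · rw [cnt_succ_mem C k hk]; omega
  · rw [cnt_succ_notMem C k hk]; omega

lemma cnt_add_le (C : Set ℕ) (a d : ℕ) : cnt C (a + d) ≤ cnt C a + d := by
  induction d with
  | zero => simp
  | succ d ih =>
    show cnt C ((a + d) + 1) ≤ cnt C a + (d + 1)
    have h2 := (cnt_succ_le C (a + d)).2
    omega

lemma cnt_slope (C : Set ℕ) {a b : ℕ} (hab : a ≤ b) : cnt C b ≤ cnt C a + (b - a) := by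
  have := cnt_add_le C a (b - a)
  rwa [Nat.add_sub_cancel' hab] at this

lemma cnt_le_self (C : Set ℕ) (k : ℕ) : cnt C k ≤ k := by
  have := cnt_add_le C 0 k
  simpa [cnt_zero] using this

lemma cnt_mono (C : Set ℕ) : Monotone (cnt C) :=
  monotone_nat_of_le_succ fun k => (cnt_succ_le C k).1

/-- any `ℕ`-valued function starting at `0` with steps in `{0,1}` is a counting function -/
lemma exists_cnt (x : ℕ → ℕ) (h0 : x 0 = 0)
    (hstep : ∀ k, x k ≤ x (k + 1) ∧ x (k + 1) ≤ x k + 1) :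
    ∃ X : Set ℕ, ∀ k, cnt X k = x k := by
  classical
  refine ⟨{k | x (k + 1) = x k + 1}, fun k => ?_⟩
  induction k with
  | zero => simp [cnt_zero, h0]
  | succ k ih =>
    by_cases hk : x (k + 1) = x k + 1
    · rw [cnt_succ_mem {k | x (k + 1) = x k + 1} k hk, ih, hk]
    · have h2 := hstep k
      have h3 : x (k + 1) = x k := by omega
      rw [cnt_succ_notMem {k | x (k + 1) = x k + 1} k hk, ih, h3]

/-! ### the maximal feasible counting values -/

/-- `Np f w δ j` : the largest `n` with `f n ≤ δ * f (w j)`. -/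
noncomputable def Np (f : ℝ → ℝ) (w : ℕ → ℕ) (δ : ℝ) (j : ℕ) : ℕ :=
  sSup {n : ℕ | f n ≤ δ * f (w j)}

lemma Np_nonempty (hf : IsModulus f) {δ : ℝ} (hδ : 0 ≤ δ) (w : ℕ → ℕ) (j : ℕ) :
    {n : ℕ | f n ≤ δ * f (w j)}.Nonempty := by
  refine ⟨0, ?_⟩
  simp only [Set.mem_setOf_eq, Nat.cast_zero, mod_zero hf]
  exact mul_nonneg hδ (mod_nonneg hf (Nat.cast_nonneg _))

lemma Np_bddAbove (hf : IsModulus f) (hfu : IsUnboundedMod f) (B : ℝ) :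
    BddAbove {n : ℕ | f n ≤ B} := by
  obtain ⟨m, hm⟩ := eventually_atTop.1 ((mod_tendstoN hf hfu).eventually_gt_atTop B)
  refine ⟨m, fun n hn => ?_⟩
  by_contra hc
  exact absurd hn (not_le.2 (hm n (le_of_not_ge hc)))

lemma Np_le (hf : IsModulus f) (hfu : IsUnboundedMod f) {δ : ℝ} (hδ : 0 ≤ δ)
    (w : ℕ → ℕ) (j : ℕ) : f (Np f w δ j) ≤ δ * f (w j) :=
  Nat.sSup_mem (Np_nonempty hf hδ w j) (Np_bddAbove hf hfu _)

lemma le_Np (hf : IsModulus f) (hfu : IsUnboundedMod f) {δ : ℝ} {w : ℕ → ℕ} {j n : ℕ}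
    (hn : f n ≤ δ * f (w j)) : n ≤ Np f w δ j :=
  le_csSup (Np_bddAbove hf hfu _) hn

lemma Np_lt (hf : IsModulus f) (hfu : IsUnboundedMod f) {δ : ℝ} {w : ℕ → ℕ} {j n : ℕ}
    (h : Np f w δ j < n) : δ * f (w j) < f n := by
  by_contra hc
  push_neg at hc
  exact absurd (le_Np hf hfu hc) (not_le.2 h)

/-- `Uf f w δ p` : the largest possible value at `p` of a counting function that is
everywhere below the `δ`-feasibility bound w.r.t. `w`. -/
noncomputable def Uf (f : ℝ → ℝ) (w : ℕ → ℕ) (δ : ℝ) (p : ℕ) : ℕ :=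
  sInf {m : ℕ | ∃ j, j ≤ p ∧ m = Np f w δ j + (p - j)}

lemma Uf_le (f : ℝ → ℝ) (w : ℕ → ℕ) (δ : ℝ) {j p : ℕ} (hj : j ≤ p) :
    Uf f w δ p ≤ Np f w δ j + (p - j) :=
  Nat.sInf_le ⟨j, hj, rfl⟩

lemma Uf_spec (f : ℝ → ℝ) (w : ℕ → ℕ) (δ : ℝ) (p : ℕ) :
    ∃ j, j ≤ p ∧ Uf f w δ p = Np f w δ j + (p - j) :=
  Nat.sInf_mem (⟨Np f w δ p + (p - p), p, le_rfl, rfl⟩ : {m : ℕ | ∃ j, j ≤ p ∧ m = Np f w δ j + (p - j)}.Nonempty)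

lemma Uf_le_Np (f : ℝ → ℝ) (w : ℕ → ℕ) (δ : ℝ) (p : ℕ) :
    Uf f w δ p ≤ Np f w δ p := by
  have := Uf_le f w δ (le_refl p)
  simpa using this

/-! ### membership criteria for `ZgfN` -/

lemma mem_ZgfN (hf : IsModulus f) {w : ℕ → ℕ} {C : Set ℕ}
    (hw : ∀ᶠ k in atTop, 0 < f (w k))
    (hb : ∀ ε : ℝ, 0 < ε → ∀ᶠ k in atTop, f (cnt C k) ≤ ε * f (w k)) :
    C ∈ ZgfN f w := by
  simp only [ZgfN, Set.mem_setOf_eq]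
  rw [Metric.tendsto_atTop]
  intro ε hε
  obtain ⟨N, hN⟩ := eventually_atTop.1 ((hb (ε / 2) (by positivity)).and hw)
  refine ⟨N, fun n hn => ?_⟩
  obtain ⟨h1, h2⟩ := hN n hn
  rw [Real.dist_eq, sub_zero,
    abs_of_nonneg (div_nonneg (mod_nonneg hf (Nat.cast_nonneg _)) h2.le), div_lt_iff₀ h2]
  nlinarith

lemma ZgfN_lt (hf : IsModulus f) {w : ℕ → ℕ} {C : Set ℕ}
    (hw : ∀ᶠ k in atTop, 0 < f (w k)) (hmem : C ∈ ZgfN f w)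
    {ε : ℝ} (hε : 0 < ε) : ∀ᶠ k in atTop, f (cnt C k) < ε * f (w k) := by
  simp only [ZgfN, Set.mem_setOf_eq] at hmem
  rw [Metric.tendsto_atTop] at hmem
  obtain ⟨N, hN⟩ := hmem ε hε
  rw [eventually_atTop] at hw ⊢
  obtain ⟨M, hM⟩ := hw
  refine ⟨max N M, fun n hn => ?_⟩
  have h1 := hN n (le_trans (le_max_left _ _) hn)
  have h2 := hM n (le_trans (le_max_right _ _) hn)
  rw [Real.dist_eq, sub_zero] at h1
  have h3 : f (cnt C n) / f (w n) < ε := lt_of_le_of_lt (le_abs_self _) h1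
  rwa [div_lt_iff₀ h2] at h3

lemma not_ZgfN (hf : IsModulus f) {w : ℕ → ℕ} {C : Set ℕ}
    (hw : ∀ᶠ k in atTop, 0 < f (w k))
    {ε : ℝ} (hε : 0 < ε) (hfreq : ∃ᶠ k in atTop, ε * f (w k) ≤ f (cnt C k)) :
    C ∉ ZgfN f w := fun hmem => by
  obtain ⟨k, hk1, hk2⟩ := (hfreq.and_eventually (ZgfN_lt hf hw hmem hε)).exists
  exact absurd hk2 (not_lt.2 hk1)

lemma freq_of_not_ZgfN (hf : IsModulus f) {w : ℕ → ℕ} {C : Set ℕ}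
    (hw : ∀ᶠ k in atTop, 0 < f (w k)) (hmem : C ∉ ZgfN f w) :
    ∃ ε : ℝ, 0 < ε ∧ ∃ᶠ k in atTop, ε * f (w k) ≤ f (cnt C k) := by
  simp only [ZgfN, Set.mem_setOf_eq] at hmem
  rw [Metric.tendsto_atTop] at hmem
  push_neg at hmem
  obtain ⟨ε, hε, hfr⟩ := hmem
  refine ⟨ε, hε, ?_⟩
  rw [frequently_atTop]
  intro N
  obtain ⟨M, hM⟩ := eventually_atTop.1 hw
  obtain ⟨n, hn, hdist⟩ := hfr (max N M)
  refine ⟨n, le_trans (le_max_left _ _) hn, ?_⟩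
  have hwn := hM n (le_trans (le_max_right _ _) hn)
  rw [Real.dist_eq, sub_zero,
    abs_of_nonneg (div_nonneg (mod_nonneg hf (Nat.cast_nonneg _)) hwn.le)] at hdist
  rwa [← le_div_iff₀ hwn]

/-! ### the ramp construction -/

/-- Given peaks `p i` and heights `c i` which are feasible w.r.t. `w` at level `1/(i+1)`,
there is a set in `ZgfN f w` whose counting function reaches `c i` at `p i`. -/
lemma ramp (hf : IsModulus f) (hfu : IsUnboundedMod f) {w : ℕ → ℕ}
    (hwm : Monotone w) (hwt : Tendsto w atTop atTop)
    (p c : ℕ → ℕ) (hpi : ∀ i, i ≤ p i)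
    (hc1 : ∀ i, c i ≤ Uf f w (1 / (i + 1 : ℝ)) (p i))
    (hc2 : ∀ i, c i + i ≤ p i) :
    ∃ X : Set ℕ, X ∈ ZgfN f w ∧ ∀ i, c i ≤ cnt X (p i) := by
  set x : ℕ → ℕ := fun k => (Finset.range (k + 1)).sup (fun i => c i - (p i - k)) with hxdef
  have hx0 : x 0 = 0 := by
    apply Nat.eq_zero_of_le_zero
    apply Finset.sup_le
    intro i hi
    have := hc2 i
    omega
  have hstep : ∀ k, x k ≤ x (k + 1) ∧ x (k + 1) ≤ x k + 1 := by
    intro k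
    constructor
    · apply Finset.sup_le
      intro i hi
      have hi2 : i ∈ Finset.range (k + 2) := by
        simp only [Finset.mem_range] at hi ⊢; omega
      have h4 : c i - (p i - (k + 1)) ≤ x (k + 1) :=
        Finset.le_sup (f := fun i => c i - (p i - (k + 1))) hi2
      omega
    · apply Finset.sup_le
      intro i hi
      simp only [Finset.mem_range] at hi
      rcases Nat.lt_succ_iff_lt_or_eq.1 hi with hik | hik
      · have hmem : i ∈ Finset.range (k + 1) := Finset.mem_range.2 hik
        have h4 : c i - (p i - k) ≤ x k :=
          Finset.le_sup (f := fun i => c i - (p i - k)) hmem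
        omega
      · have := hc2 i
        omega
  obtain ⟨X, hX⟩ := exists_cnt x hx0 hstep
  have hwpos : ∀ᶠ k in atTop, 0 < f (w k) :=
    (hwt.eventually_ge_atTop 1).mono fun k hk => mod_pos hf (by exact_mod_cast hk)
  -- the key per-term bound
  have xbound : ∀ i k, f ((c i - (p i - k) : ℕ) : ℝ) ≤ (1 / (i + 1 : ℝ)) * f (w k) := by
    intro i k
    have hδ : (0 : ℝ) ≤ 1 / (i + 1 : ℝ) := by positivity
    rcases le_total k (p i) with hk | hk
    · have h1 : c i - (p i - k) ≤ Np f w (1 / (i + 1 : ℝ)) k := by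
        have h2 := Uf_le f w (1 / (i + 1 : ℝ)) hk
        have h3 := hc1 i
        omega
      exact le_trans (mod_monoN hf h1) (Np_le hf hfu hδ w k)
    · have h0 : p i - k = 0 := Nat.sub_eq_zero_of_le hk
      rw [h0, Nat.sub_zero]
      have h1 : c i ≤ Np f w (1 / (i + 1 : ℝ)) (p i) :=
        le_trans (hc1 i) (Uf_le_Np f w _ (p i))
      calc f (c i) ≤ (1 / (i + 1 : ℝ)) * f (w (p i)) :=
            le_trans (mod_monoN hf h1) (Np_le hf hfu hδ w (p i))
        _ ≤ (1 / (i + 1 : ℝ)) * f (w k) :=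
            mul_le_mul_of_nonneg_left (mod_monoN hf (hwm hk)) hδ
  refine ⟨X, ?_, fun i => ?_⟩
  · apply mem_ZgfN hf hwpos
    intro ε hε
    obtain ⟨I, hI⟩ := exists_nat_one_div_lt hε
    set B : ℕ := (Finset.range (I + 1)).sup c with hB
    have hwtop : Tendsto (fun k => f (w k)) atTop atTop :=
      (mod_tendstoN hf hfu).comp hwt
    have hev : ∀ᶠ k in atTop, f B ≤ ε * f (w k) := by
      filter_upwards [hwtop.eventually_ge_atTop (f B / ε)] with k hk
      rw [div_le_iff₀ hε] at hk
      linarith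
    filter_upwards [hev] with k hk
    rw [hX k]
    obtain ⟨i, hiMem, hieq⟩ := Finset.exists_mem_eq_sup (Finset.range (k + 1))
      ⟨0, Finset.mem_range.2 (Nat.succ_pos _)⟩ (fun i => c i - (p i - k))
    have hxk : x k = c i - (p i - k) := hieq
    rcases le_or_gt i I with hiI | hiI
    · have h1 : x k ≤ B := by
        rw [hxk]
        exact le_trans (Nat.sub_le _ _) (Finset.le_sup (Finset.mem_range.2 (by omega)))
      exact le_trans (mod_monoN hf h1) hk
    · rw [hxk]
      refine le_trans (xbound i k) ?_
      have h2 : (1 : ℝ) / (i + 1 : ℝ) ≤ 1 / (I + 1 : ℝ) := by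
        apply one_div_le_one_div_of_le (by positivity)
        have : (I : ℝ) ≤ i := by exact_mod_cast hiI.le
        linarith
      have h3 : (0 : ℝ) ≤ f (w k) := mod_nonneg hf (Nat.cast_nonneg _)
      nlinarith
  · rw [hX (p i)]
    have hmem : i ∈ Finset.range (p i + 1) := Finset.mem_range.2 (by have := hpi i; omega)
    have h4 : c i - (p i - p i) ≤ x (p i) :=
      Finset.le_sup (f := fun j => c j - (p j - p i)) hmem
    omega

/-- From a family of feasible peaks (w.r.t. `w`) that are large (w.r.t. `v`),
derive a contradiction with `ZgfN f w ⊆ ZgfN f v`. -/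
lemma no_witness (hf : IsModulus f) (hfu : IsUnboundedMod f) {v w : ℕ → ℕ}
    (hwm : Monotone w) (hwt : Tendsto w atTop atTop)
    (hv1 : ∀ᶠ k in atTop, 0 < f (v k))
    (hsub : ZgfN f w ⊆ ZgfN f v)
    {ε' : ℝ} (hε' : 0 < ε')
    (hdata : ∀ i : ℕ, ∃ r : ℕ, i ≤ r ∧ ∃ cv : ℕ,
      cv ≤ Uf f w (1 / (i + 1 : ℝ)) r ∧ cv + i ≤ r ∧ ε' * f (v r) ≤ f cv) :
    False := by
  choose r hr cv hcv1 hcv2 hcv3 using hdata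
  obtain ⟨X, hXmem, hXpeak⟩ := ramp hf hfu hwm hwt r cv hr hcv1 hcv2
  have hXv : X ∈ ZgfN f v := hsub hXmem
  have hfreq : ∃ᶠ k in atTop, ε' * f (v k) ≤ f (cnt X k) := by
    rw [frequently_atTop]
    intro N
    exact ⟨r N, hr N, le_trans (hcv3 N) (mod_monoN hf (hXpeak N))⟩
  exact not_ZgfN hf hv1 hε' hfreq hXv

lemma scale_helper {ε c A B : ℝ} (hε : 0 < ε) (hc : 0 < c) (h : (c / ε) * A ≤ B) :
    A ≤ (ε / c) * B := by
  have h2 := mul_le_mul_of_nonneg_left h (by positivity : (0:ℝ) ≤ ε / c)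
  have h3 : (ε / c) * ((c / ε) * A) = A := by field_simp
  rw [h3] at h2
  exact h2

lemma mod_addN1 (hf : IsModulus f) (a : ℕ) : f ((a + 1 : ℕ) : ℝ) ≤ f (a : ℝ) + f 1 := by
  have := mod_addN hf a 1
  simpa using this

lemma easy_dir (hf : IsModulus f) {g h : ℕ → ℕ} (hgt : Tendsto g atTop atTop) {C : Set ℕ}
    (hC : C ∈ ZgfN f g) : C ∈ ZgfN f (fun k => max (g k) (h k)) := by
  have hg1 : ∀ᶠ k in atTop, 0 < f (g k) :=
    (hgt.eventually_ge_atTop 1).mono fun k hk => mod_pos hf (by exact_mod_cast hk)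
  have hmax1 : ∀ᶠ k in atTop, 0 < f ((max (g k) (h k) : ℕ) : ℝ) :=
    (hgt.eventually_ge_atTop 1).mono fun k hk => mod_pos hf (by
      have h2 : (1 : ℕ) ≤ max (g k) (h k) := le_trans hk (le_max_left _ _)
      exact_mod_cast h2)
  apply mem_ZgfN hf hmax1
  intro ε hε
  filter_upwards [ZgfN_lt hf hg1 hC hε] with k hk
  refine le_trans hk.le (mul_le_mul_of_nonneg_left ?_ hε.le)
  exact mod_monoN hf (le_max_left _ _)

lemma hard (hf : IsModulus f) (hfu : IsUnboundedMod f) {g h : ℕ → ℕ}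
    (hgm : Monotone g) (hgt : Tendsto g atTop atTop)
    (hhm : Monotone h) (hht : Tendsto h atTop atTop)
    (heq : ZgfN f g = ZgfN f h) {C : Set ℕ}
    (hC : C ∈ ZgfN f (fun k => max (g k) (h k))) : C ∈ ZgfN f g := by
  by_contra hCg
  have hg1 : ∀ᶠ k in atTop, 0 < f (g k) :=
    (hgt.eventually_ge_atTop 1).mono fun k hk => mod_pos hf (by exact_mod_cast hk)
  have hh1 : ∀ᶠ k in atTop, 0 < f (h k) :=
    (hht.eventually_ge_atTop 1).mono fun k hk => mod_pos hf (by exact_mod_cast hk)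
  have hmax1 : ∀ᶠ k in atTop, 0 < f ((max (g k) (h k) : ℕ) : ℝ) :=
    (hgt.eventually_ge_atTop 1).mono fun k hk => mod_pos hf (by
      have h2 : (1 : ℕ) ≤ max (g k) (h k) := le_trans hk (le_max_left _ _)
      exact_mod_cast h2)
  have hfg : Tendsto (fun k => f (g k)) atTop atTop := (mod_tendstoN hf hfu).comp hgt
  have hfh : Tendsto (fun k => f (h k)) atTop atTop := (mod_tendstoN hf hfu).comp hht
  obtain ⟨ε₀, hε₀, hS⟩ := freq_of_not_ZgfN hf hg1 hCg
  have hMax : ∀ σ : ℝ, 0 < σ →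
      ∀ᶠ k in atTop, f (cnt C k) < σ * f ((max (g k) (h k) : ℕ) : ℝ) :=
    fun σ hσ => ZgfN_lt hf hmax1 hC hσ
  by_cases hβ : ∃ J : ℕ, ∀ N : ℕ, ∃ r, N ≤ r ∧ ε₀ * f (g r) ≤ f (cnt C r) ∧ r - J ≤ cnt C r
  · -- nearly-full case: build a witness in `Z_h ∖ Z_g`
    obtain ⟨J₀, hJ₀⟩ := hβ
    refine no_witness hf hfu hhm hht hg1 heq.symm.subset
      (show (0:ℝ) < ε₀ / 4 by positivity) fun i => ?_
    set δi : ℝ := 1 / (i + 1 : ℝ) with hδidef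
    have hδipos : 0 < δi := by positivity
    set σt : ℝ := min δi (ε₀ / 4) with hσtdef
    have hσtpos : 0 < σt := lt_min hδipos (by positivity)
    obtain ⟨J₂, hJ₂⟩ := eventually_atTop.1 (hMax σt hσtpos)
    set junk : ℝ := f (J₂ : ℕ) + f (J₀ : ℕ) + f 1 with hjunkdef
    obtain ⟨T, hT⟩ := eventually_atTop.1
      ((hfg.eventually_ge_atTop ((4 / ε₀) * junk)).and
        (hfg.eventually_ge_atTop ((2 / ε₀) * f ((i + 1 : ℕ) : ℝ))))
    obtain ⟨r, hrT, hrS, hrfull⟩ := hJ₀ (max i T)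
    have hri : i ≤ r := le_trans (le_max_left _ _) hrT
    obtain ⟨hthr1, hthr2⟩ := hT r (le_trans (le_max_right _ _) hrT)
    have hjunk4 : junk ≤ (ε₀ / 4) * f (g r) := scale_helper hε₀ (by norm_num) hthr1
    have hii : f ((i + 1 : ℕ) : ℝ) ≤ (ε₀ / 2) * f (g r) := scale_helper hε₀ (by norm_num) hthr2
    have hfgrnn : (0:ℝ) ≤ f (g r) := mod_nonneg hf (Nat.cast_nonneg _)
    have hε₀fgr : (0:ℝ) ≤ ε₀ * f (g r) := mul_nonneg hε₀.le hfgrnn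
    have hfRle : ε₀ * f (g r) ≤ f (r : ℕ) := le_trans hrS (mod_monoN hf (cnt_le_self C r))
    have hJ₂nn : (0:ℝ) ≤ f (J₂ : ℕ) := mod_nonneg hf (Nat.cast_nonneg _)
    have hJ₀nn : (0:ℝ) ≤ f (J₀ : ℕ) := mod_nonneg hf (Nat.cast_nonneg _)
    have h1nn : (0:ℝ) ≤ f 1 := mod_nonneg hf (by norm_num)
    -- lower bound for the first component
    obtain ⟨j', hj'le, hj'eq⟩ := Uf_spec f h δi r
    set u : ℕ := Uf f h δi r with hudef
    have hu1 : f ((r - j' : ℕ) : ℝ) ≤ f (u : ℕ) := mod_monoN hf (by omega)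
    have hu2 : f ((Np f h δi j' : ℕ) : ℝ) ≤ f (u : ℕ) := mod_monoN hf (by omega)
    have hsubr := mod_sub hf r j'
    have key1 : (ε₀ / 4) * f (g r) ≤ f (u : ℕ) := by
      rcases le_or_gt j' (J₂ + J₀) with hsmall | hbig
      · have h2 : f (j' : ℕ) ≤ f ((J₂ + J₀ : ℕ) : ℝ) := mod_monoN hf hsmall
        have h3 := mod_addN hf J₂ J₀
        linarith
      · have hcntj' : j' - J₀ ≤ cnt C j' := by
          have := cnt_slope C hj'le
          omega
        have hfj' : f (j' : ℕ) - f (J₀ : ℕ) ≤ f (cnt C j') :=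
          le_trans (mod_sub hf j' J₀) (mod_monoN hf hcntj')
        have hZj' := hJ₂ j' (by omega)
        rcases le_total (h j') (g j') with hA | hB2
        · rw [max_eq_left hA] at hZj'
          have h6 : σt * f ((g j' : ℕ) : ℝ) ≤ σt * f (g r) :=
            mul_le_mul_of_nonneg_left (mod_monoN hf (hgm hj'le)) hσtpos.le
          have h7 : σt * f (g r) ≤ (ε₀ / 4) * f (g r) :=
            mul_le_mul_of_nonneg_right (min_le_right _ _) hfgrnn
          linarith
        · rw [max_eq_right hB2] at hZj'
          have hNp1 : δi * f ((h j' : ℕ) : ℝ) < f ((Np f h δi j' + 1 : ℕ) : ℝ) :=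
            Np_lt hf hfu (Nat.lt_succ_self _)
          have hNp2 : f ((Np f h δi j' + 1 : ℕ) : ℝ) ≤ f ((Np f h δi j' : ℕ) : ℝ) + f 1 :=
            mod_addN1 hf _
          have h12 : σt * f ((h j' : ℕ) : ℝ) ≤ δi * f ((h j' : ℕ) : ℝ) :=
            mul_le_mul_of_nonneg_right (min_le_left _ _) (mod_nonneg hf (Nat.cast_nonneg _))
          linarith
    have key2 : (ε₀ / 4) * f (g r) ≤ f ((cnt C r - (i + 1) : ℕ) : ℝ) := by
      have h1 := mod_sub hf (cnt C r) (i + 1)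
      linarith
    refine ⟨r, hri, min u (cnt C r - (i + 1)), min_le_left _ _, ?_, ?_⟩
    · have := cnt_le_self C r
      omega
    · rcases le_total u (cnt C r - (i + 1)) with hm | hm
      · rw [min_eq_left hm]; exact key1
      · rw [min_eq_right hm]; exact key2
  · push_neg at hβ
    by_cases h2 : ∃ δ : ℝ, 0 < δ ∧ ∃ N, ∀ p, N ≤ p →
        ε₀ * f (g p) ≤ f (cnt C p) → f ((Uf f h δ p : ℕ) : ℝ) ≤ (ε₀ / 2) * f (g p)
    · -- subcase with the `δ₀`-bound: build a witness in `Z_g ∖ Z_h`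
      obtain ⟨δ₀, hδ₀pos, N₀, hN₀⟩ := h2
      refine no_witness hf hfu hgm hgt hh1 heq.subset
        (show (0:ℝ) < δ₀ / 4 by positivity) fun i => ?_
      set σi : ℝ := 1 / (i + 1 : ℝ) with hσidef
      have hσipos : 0 < σi := by positivity
      set σ'' : ℝ := min σi δ₀ / 2 with hσ''def
      have hσ''pos : 0 < σ'' := by
        have := lt_min hσipos hδ₀pos
        positivity
      obtain ⟨J₂, hJ₂⟩ := eventually_atTop.1 (hMax σ'' hσ''pos)
      obtain ⟨Tq, hTq⟩ := eventually_atTop.1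
        ((hfh.eventually_ge_atTop ((2 / δ₀) * f ((i + 1 : ℕ) : ℝ))).and
          (hfh.eventually_ge_atTop ((4 / δ₀) * f ((J₂ : ℕ) : ℝ))))
      obtain ⟨Nβ, hNβ⟩ := hβ (max Tq i)
      have hfr := hS.and_eventually hg1
      rw [frequently_atTop] at hfr
      obtain ⟨p, hpge, hpS, hgp⟩ := hfr (max N₀ Nβ)
      have hUp := hN₀ p (le_trans (le_max_left _ _) hpge) hpS
      have hlt : Uf f h δ₀ p < cnt C p := by
        by_contra hc
        push_neg at hc
        have h3 := mod_monoN hf hc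
        have h4 := mul_pos hε₀ hgp
        linarith
      obtain ⟨q, hqle, hqeq⟩ := Uf_spec f h δ₀ p
      have hβp := hNβ p (le_trans (le_max_right _ _) hpge) hpS
      have hqbig : max Tq i < q := by omega
      have hcq : Np f h δ₀ q < cnt C q := by
        have := cnt_slope C hqle
        omega
      have ha : δ₀ * f ((h q : ℕ) : ℝ) < f (cnt C q) := Np_lt hf hfu hcq
      obtain ⟨hthr1', hthr2'⟩ := hTq q (by omega)
      have hthr1 : f ((i + 1 : ℕ) : ℝ) ≤ (δ₀ / 2) * f (h q) :=
        scale_helper hδ₀pos (by norm_num) hthr1'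
      have hthr2 : f ((J₂ : ℕ) : ℝ) ≤ (δ₀ / 4) * f (h q) :=
        scale_helper hδ₀pos (by norm_num) hthr2'
      have hfhqnn : (0:ℝ) ≤ f (h q) := mod_nonneg hf (Nat.cast_nonneg _)
      have hδ₀fhq : (0:ℝ) ≤ δ₀ * f (h q) := mul_nonneg hδ₀pos.le hfhqnn
      refine ⟨q, by omega, min (Uf f g σi q) (cnt C q - (i + 1)), min_le_left _ _, ?_, ?_⟩
      · have := cnt_le_self C q
        omega
      · have hcq1 : 1 ≤ cnt C q := by
          by_contra hc
          have hzero : cnt C q = 0 := by omega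
          rw [hzero] at ha
          simp only [Nat.cast_zero, mod_zero hf] at ha
          linarith
        rcases le_total ((Uf f g σi q : ℕ)) (cnt C q - (i + 1)) with hm | hm
        · rw [min_eq_left hm]
          -- the dichotomy lower bound
          set u' : ℕ := Uf f g σi q with hu'def
          have hult : u' < cnt C q := by omega
          obtain ⟨j'', hj''le, hj''eq⟩ := Uf_spec f g σi q
          have hcntj'' : Np f g σi j'' < cnt C j'' := by
            have := cnt_slope C hj''le
            omega
          have hbig2 : σi * f ((g j'' : ℕ) : ℝ) < f (cnt C j'') := Np_lt hf hfu hcntj''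
          have hsplit : f (cnt C q) ≤ f (cnt C j'') + f ((q - j'' : ℕ) : ℝ) :=
            le_trans (mod_monoN hf (cnt_slope C hj''le)) (mod_addN hf _ _)
          have hfu' : f ((q - j'' : ℕ) : ℝ) ≤ f ((u' : ℕ) : ℝ) := mod_monoN hf (by omega)
          rcases le_or_gt j'' J₂ with hsm | hbg
          · have h1 : f ((cnt C j'' : ℕ) : ℝ) ≤ f ((J₂ : ℕ) : ℝ) :=
              mod_monoN hf (le_trans (cnt_le_self C j'') hsm)
            linarith
          · have hZ := hJ₂ j'' hbg.le
            rcases le_total (h j'') (g j'') with hA | hB2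
            · rw [max_eq_left hA] at hZ
              exfalso
              have h1 : σ'' * f ((g j'' : ℕ) : ℝ) ≤ (σi / 2) * f ((g j'' : ℕ) : ℝ) := by
                apply mul_le_mul_of_nonneg_right _ (mod_nonneg hf (Nat.cast_nonneg _))
                have := min_le_left σi δ₀
                rw [hσ''def]
                linarith
              have h2 : (0:ℝ) ≤ σi * f ((g j'' : ℕ) : ℝ) :=
                mul_nonneg hσipos.le (mod_nonneg hf (Nat.cast_nonneg _))
              linarith
            · rw [max_eq_right hB2] at hZ
              have h1 : σ'' * f ((h j'' : ℕ) : ℝ) ≤ σ'' * f (h q) :=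
                mul_le_mul_of_nonneg_left (mod_monoN hf (hhm hj''le)) hσ''pos.le
              have h3 : σ'' * f (h q) ≤ (δ₀ / 2) * f (h q) := by
                apply mul_le_mul_of_nonneg_right _ hfhqnn
                have := min_le_right σi δ₀
                rw [hσ''def]
                linarith
              linarith
        · rw [min_eq_right hm]
          have h1 := mod_sub hf (cnt C q) (i + 1)
          linarith
    · -- final subcase: the `Uf` values are frequently large, direct witness in `Z_h ∖ Z_g`
      push_neg at h2
      refine no_witness hf hfu hhm hht hg1 heq.symm.subset
        (show (0:ℝ) < ε₀ / 4 by positivity) fun i => ?_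
      set δi : ℝ := 1 / (i + 1 : ℝ) with hδidef
      have hδipos : 0 < δi := by positivity
      obtain ⟨T, hT⟩ := eventually_atTop.1
        (hfg.eventually_ge_atTop ((2 / ε₀) * f ((i + 1 : ℕ) : ℝ)))
      obtain ⟨p, hpge, hpS, hpgt⟩ := h2 δi hδipos (max i T)
      have hii : f ((i + 1 : ℕ) : ℝ) ≤ (ε₀ / 2) * f (g p) :=
        scale_helper hε₀ (by norm_num) (hT p (le_trans (le_max_right _ _) hpge))
      have hfgpnn : (0:ℝ) ≤ f (g p) := mod_nonneg hf (Nat.cast_nonneg _)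
      have hε₀fgp : (0:ℝ) ≤ ε₀ * f (g p) := mul_nonneg hε₀.le hfgpnn
      refine ⟨p, le_trans (le_max_left _ _) hpge,
        min (Uf f h δi p) (cnt C p - (i + 1)), min_le_left _ _, ?_, ?_⟩
      · have := cnt_le_self C p
        omega
      · rcases le_total ((Uf f h δi p : ℕ)) (cnt C p - (i + 1)) with hm | hm
        · rw [min_eq_left hm]
          linarith
        · rw [min_eq_right hm]
          have h1 := mod_sub hf (cnt C p) (i + 1)
          linarith

end Stmt5Proof

theorem stmt5 (f : ℝ → ℝ) (g h : ℕ → ℕ) (hf : IsModulus f) (hfu : IsUnboundedMod f)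
    (hg : InHup g) (hh : InHup h) (heq : ZgfN f g = ZgfN f h) :
    ZgfN f g = ZgfN f (fun k => max (g k) (h k)) := by
  ext C
  constructor
  · intro hC
    exact Stmt5Proof.easy_dir hf hg.2.1 hC
  · intro hC
    exact Stmt5Proof.hard hf hfu hg.1 hg.2.1 hh.1 hh.2.1 heq hC
end

section
/- Let g ∈ H↑ (a nondecreasing ℕ-valued weight function) and let f be an unbounded modulus function. If the quotient set S_f(g) has more than one element, then it has cardinality 𝔠 (the cardinality of the continuum). -/
open Filter Topology

/-- The carrier of `S_f(g)`: those `h ∈ H↑` with `Z_g(f) = Z_h(f)`. -/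
def SfgCarrier (f : ℝ → ℝ) (g : ℕ → ℕ) : Type :=
  {h : ℕ → ℕ // InHup h ∧ ZgfN f g = ZgfN f h}

/-- The equivalence relation `R`: `h R h'` iff `limsup f(h(k))/f(h'(k)) < ∞` and
`limsup f(h'(k))/f(h(k)) < ∞` (i.e. both ratio sequences are eventually bounded above). -/
def Rrel (f : ℝ → ℝ) (g : ℕ → ℕ) (h h' : SfgCarrier f g) : Prop :=
  IsBoundedUnder (· ≤ ·) atTop (fun k => f (h.1 k : ℝ) / f (h'.1 k : ℝ)) ∧
  IsBoundedUnder (· ≤ ·) atTop (fun k => f (h'.1 k : ℝ) / f (h.1 k : ℝ))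

/-! ### Auxiliary lemmas on modulus functions -/

lemma fmono' {f : ℝ → ℝ} (hf : IsModulus f) {a b : ℝ} (ha : 0 ≤ a) (hab : a ≤ b) :
    f a ≤ f b := hf.2.1 (Set.mem_Ici.2 ha) (Set.mem_Ici.2 (ha.trans hab)) hab

lemma fpos {f : ℝ → ℝ} (hf : IsModulus f) {x : ℝ} (hx : 0 < x) : 0 < f x :=
  lt_of_le_of_ne (hf.1 x hx.le) fun h0 => absurd ((hf.2.2.2.1 x hx.le).1 h0.symm) hx.ne'

lemma f_comp_tendsto {f : ℝ → ℝ} (hf : IsModulus f) (hfu : IsUnboundedMod f)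
    {h : ℕ → ℕ} (hh : Tendsto h atTop atTop) :
    Tendsto (fun k => f (h k : ℝ)) atTop atTop := by
  rw [tendsto_atTop]
  intro M
  obtain ⟨x₀, hx₀, hM⟩ := hfu M
  have hev : ∀ᶠ k in atTop, (⌈x₀⌉₊ : ℕ) ≤ h k := tendsto_atTop.1 hh _
  exact hev.mono fun k hk => le_trans hM.le
    (fmono' hf hx₀ (le_trans (Nat.le_ceil x₀) (Nat.cast_le.2 hk)))

/-- Monotone comparison of the ideals. -/
lemma Zsub {f : ℝ → ℝ} (hf : IsModulus f) {h h' : ℕ → ℕ}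
    (hle : ∀ k, h k ≤ h' k) (hh : Tendsto h atTop atTop) :
    ZgfN f h ⊆ ZgfN f h' := by
  intro C hC
  simp only [ZgfN, Set.mem_setOf_eq] at hC ⊢
  refine squeeze_zero' (Eventually.of_forall fun k =>
    div_nonneg (hf.1 _ (Nat.cast_nonneg _)) (hf.1 _ (Nat.cast_nonneg _))) ?_ hC
  filter_upwards [tendsto_atTop.1 hh 1] with k hk
  have h1 : (0:ℝ) < f (h k : ℝ) := fpos hf (by exact_mod_cast hk)
  exact div_le_div_of_nonneg_left (hf.1 _ (Nat.cast_nonneg _)) h1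
    (fmono' hf (Nat.cast_nonneg _) (Nat.cast_le.2 (hle k)))

/-- `Z_g ⊆ Z_{min(h₀,h₁)}` when `Z_g = Z_{h₀} = Z_{h₁}`. -/
lemma Zmin {f : ℝ → ℝ} (hf : IsModulus f) {g h₀ h₁ : ℕ → ℕ}
    (e₀ : ZgfN f g = ZgfN f h₀) (e₁ : ZgfN f g = ZgfN f h₁) :
    ZgfN f g ⊆ ZgfN f (fun k => min (h₀ k) (h₁ k)) := by
  intro C hC
  have r₀ : Tendsto (fun k => f (cnt C k) / f (h₀ k : ℝ)) atTop (nhds 0) := by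
    have := e₀ ▸ hC; exact this
  have r₁ : Tendsto (fun k => f (cnt C k) / f (h₁ k : ℝ)) atTop (nhds 0) := by
    have := e₁ ▸ hC; exact this
  simp only [ZgfN, Set.mem_setOf_eq]
  have hsum : Tendsto (fun k => f (cnt C k) / f (h₀ k : ℝ) + f (cnt C k) / f (h₁ k : ℝ))
      atTop (nhds 0) := by simpa using r₀.add r₁
  refine squeeze_zero' (Eventually.of_forall fun k =>
    div_nonneg (hf.1 _ (Nat.cast_nonneg _)) (hf.1 _ (Nat.cast_nonneg _)))
    (Eventually.of_forall fun k => ?_) hsum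
  have hnn : ∀ m : ℕ, (0:ℝ) ≤ f (cnt C k) / f (m : ℝ) := fun m =>
    div_nonneg (hf.1 _ (Nat.cast_nonneg _)) (hf.1 _ (Nat.cast_nonneg _))
  rcases min_cases (h₀ k) (h₁ k) with ⟨hm, _⟩ | ⟨hm, _⟩
  · rw [hm]; exact le_add_of_nonneg_right (hnn _)
  · rw [hm]; exact le_add_of_nonneg_left (hnn _)

/-! ### `Rrel` is an equivalence relation -/

lemma bdd_refl {f : ℝ → ℝ} (h : ℕ → ℕ) :
    IsBoundedUnder (· ≤ ·) atTop (fun k => f (h k : ℝ) / f (h k : ℝ)) := by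
  refine ⟨1, ?_⟩
  rw [eventually_map]
  refine Eventually.of_forall fun k => ?_
  rcases eq_or_ne (f (h k : ℝ)) 0 with h0 | h0
  · simp [h0]
  · rw [div_self h0]

lemma bdd_trans {f : ℝ → ℝ} (hf : IsModulus f) {h₀ h₁ h₂ : ℕ → ℕ}
    (t1 : Tendsto h₁ atTop atTop)
    (B1 : IsBoundedUnder (· ≤ ·) atTop (fun k => f (h₀ k : ℝ) / f (h₁ k : ℝ)))
    (B2 : IsBoundedUnder (· ≤ ·) atTop (fun k => f (h₁ k : ℝ) / f (h₂ k : ℝ))) :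
    IsBoundedUnder (· ≤ ·) atTop (fun k => f (h₀ k : ℝ) / f (h₂ k : ℝ)) := by
  obtain ⟨b₁, hb₁⟩ := B1
  obtain ⟨b₂, hb₂⟩ := B2
  rw [eventually_map] at hb₁ hb₂
  refine ⟨b₁ * b₂, ?_⟩
  rw [eventually_map]
  filter_upwards [hb₁, hb₂, tendsto_atTop.1 t1 1] with k hk₁ hk₂ hk3
  have hp1 : (0:ℝ) < f (h₁ k : ℝ) := fpos hf (by exact_mod_cast hk3)
  have hnn0 : (0:ℝ) ≤ f (h₀ k : ℝ) := hf.1 _ (Nat.cast_nonneg _)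
  have hnn2 : (0:ℝ) ≤ f (h₁ k : ℝ) / f (h₂ k : ℝ) :=
    div_nonneg hp1.le (hf.1 _ (Nat.cast_nonneg _))
  have key : f (h₀ k : ℝ) / f (h₂ k : ℝ) =
      (f (h₀ k : ℝ) / f (h₁ k : ℝ)) * (f (h₁ k : ℝ) / f (h₂ k : ℝ)) := by
    rw [div_mul_div_comm, mul_comm (f (h₀ k : ℝ)), mul_div_mul_left _ _ hp1.ne']
  rw [key]
  exact mul_le_mul hk₁ hk₂ hnn2 (le_trans (div_nonneg hnn0 hp1.le) hk₁)

lemma rrel_equiv (f : ℝ → ℝ) (g : ℕ → ℕ) (hf : IsModulus f) :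
    Equivalence (Rrel f g) where
  refl a := ⟨bdd_refl a.1, bdd_refl a.1⟩
  symm h := ⟨h.2, h.1⟩
  trans := fun {a b c} hab hbc =>
    ⟨bdd_trans hf b.2.1.2.1 hab.1 hbc.1, bdd_trans hf b.2.1.2.1 hbc.2 hab.2⟩

/-! ### The mixing construction -/

open Classical in
/-- auxiliary: sup of `h₀ (seq n)` over indices `n ∈ A` with `seq n ≤ k`. -/
noncomputable def wfun (h₀ seq : ℕ → ℕ) (A : Set ℕ) (k : ℕ) : ℕ :=
  (Finset.range (k+1)).sup fun n => if seq n ≤ k ∧ n ∈ A then h₀ (seq n) else 0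

lemma wfun_mono (h₀ seq : ℕ → ℕ) (A : Set ℕ) : Monotone (wfun h₀ seq A) := by
  classical
  intro k k' hkk'
  refine Finset.sup_le fun n hn => ?_
  by_cases c : seq n ≤ k ∧ n ∈ A
  · rw [if_pos c]
    have c' : seq n ≤ k' ∧ n ∈ A := ⟨c.1.trans hkk', c.2⟩
    have hn' : n ∈ Finset.range (k'+1) :=
      Finset.mem_range.2 (lt_of_lt_of_le (Finset.mem_range.1 hn) (by omega))
    have hle := Finset.le_sup (s := Finset.range (k'+1))
      (f := fun n => if seq n ≤ k' ∧ n ∈ A then h₀ (seq n) else 0) hn'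
    have hle' : (if seq n ≤ k' ∧ n ∈ A then h₀ (seq n) else 0) ≤ wfun h₀ seq A k' := hle
    rwa [if_pos c'] at hle'
  · rw [if_neg c]; exact Nat.zero_le _

lemma wfun_le (h₀ seq : ℕ → ℕ) (A : Set ℕ) (mono₀ : Monotone h₀) (k : ℕ) :
    wfun h₀ seq A k ≤ h₀ k := by
  classical
  refine Finset.sup_le fun n _ => ?_
  by_cases c : seq n ≤ k ∧ n ∈ A
  · rw [if_pos c]; exact mono₀ c.1
  · rw [if_neg c]; exact Nat.zero_le _

lemma le_wfun (h₀ seq : ℕ → ℕ) (A : Set ℕ) (sm : StrictMono seq) {n k : ℕ}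
    (hA : n ∈ A) (hk : seq n ≤ k) : h₀ (seq n) ≤ wfun h₀ seq A k := by
  classical
  have hn : n ∈ Finset.range (k+1) := Finset.mem_range.2 (by
    have := sm.le_apply (x := n); omega)
  have hle := Finset.le_sup (s := Finset.range (k+1))
    (f := fun n => if seq n ≤ k ∧ n ∈ A then h₀ (seq n) else 0) hn
  have hle' : (if seq n ≤ k ∧ n ∈ A then h₀ (seq n) else 0) ≤ wfun h₀ seq A k := hle
  rwa [if_pos ⟨hk, hA⟩] at hle'

lemma wfun_le_of_notMem (h₀ seq : ℕ → ℕ) (A : Set ℕ) (sm : StrictMono seq)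
    (mono₀ : Monotone h₀) {n : ℕ} (hn : n ∉ A) (h1 : 1 ≤ n) :
    wfun h₀ seq A (seq n) ≤ h₀ (seq (n-1)) := by
  classical
  refine Finset.sup_le fun m _ => ?_
  by_cases c : seq m ≤ seq n ∧ m ∈ A
  · rw [if_pos c]
    have hmn : m ≤ n := (sm.le_iff_le).1 c.1
    have hne : m ≠ n := fun h => hn (h ▸ c.2)
    exact mono₀ (sm.monotone (by omega))
  · rw [if_neg c]; exact Nat.zero_le _

/-- branches of the binary tree: an almost disjoint family. -/
def ADset (x : ℕ → Bool) : Set ℕ :=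
  Set.range fun m => Encodable.encode (List.ofFn fun i : Fin m => x i)

lemma ADset_diff_infinite {x y : ℕ → Bool} (hxy : x ≠ y) :
    (ADset x \ ADset y).Infinite := by
  obtain ⟨d, hd⟩ := Function.ne_iff.1 hxy
  set E : (ℕ → Bool) → ℕ → ℕ :=
    fun z m => Encodable.encode (List.ofFn fun i : Fin m => z i) with hE
  have hsub : (E x) '' (Set.Ioi d) ⊆ ADset x \ ADset y := by
    rintro _ ⟨m, hm, rfl⟩
    refine ⟨⟨m, rfl⟩, ?_⟩
    rintro ⟨m', hm'⟩
    have hl := Encodable.encode_injective hm'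
    have hlen : m' = m := by
      have := congrArg List.length hl; simpa using this
    subst hlen
    have := List.ofFn_injective hl
    have := congrFun this ⟨d, hm⟩
    exact hd (by simpa using this.symm)
  refine Set.Infinite.mono hsub ?_
  refine Set.Infinite.image ?_ (Set.Ioi_infinite d)
  intro a _ b _ hab
  have hl := Encodable.encode_injective hab
  have := congrArg List.length hl; simpa using this

/-- The mixed weight function. -/
noncomputable def mixfun (h₀ h₁ seq : ℕ → ℕ) (A : Set ℕ) (k : ℕ) : ℕ :=
  max (min (h₀ k) (h₁ k)) (wfun h₀ seq A k)

/-! ### The lower bound -/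

lemma lower_bound (f : ℝ → ℝ) (g : ℕ → ℕ) (hf : IsModulus f) (hfu : IsUnboundedMod f)
    (h₀ h₁ : ℕ → ℕ) (H₀ : InHup h₀) (H₁ : InHup h₁)
    (e₀ : ZgfN f g = ZgfN f h₀) (e₁ : ZgfN f g = ZgfN f h₁)
    (hub : ∀ b : ℝ, ∃ᶠ k in atTop, b < f (h₀ k : ℝ) / f (h₁ k : ℝ)) :
    Cardinal.continuum ≤ Cardinal.mk (Quot (Rrel f g)) := by
  classical
  obtain ⟨mono₀, top₀, nt₀⟩ := H₀
  obtain ⟨mono₁, top₁, nt₁⟩ := H₁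
  -- the step sequence
  have exkey : ∀ n p : ℕ, ∃ K : ℕ, p < K ∧ ((n:ℝ)+1) * f (h₁ K : ℝ) < f (h₀ K : ℝ) ∧
      ((n:ℝ)+1) * f (h₀ p : ℝ) < f (h₀ K : ℝ) := by
    intro n p
    have ftop := f_comp_tendsto hf hfu top₀
    have hev : ∀ᶠ K in atTop, ((n:ℝ)+1) * f (h₀ p : ℝ) < f (h₀ K : ℝ) :=
      (tendsto_atTop.1 ftop (((n:ℝ)+1) * f (h₀ p : ℝ) + 1)).mono fun K hK =>
        lt_of_lt_of_le (lt_add_one _) hK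
    obtain ⟨K, hKp, hr, hgrow⟩ := frequently_atTop.1 ((hub ((n:ℝ)+1)).and_eventually hev) (p+1)
    refine ⟨K, by omega, ?_, hgrow⟩
    have hd : 0 < f (h₁ K : ℝ) := by
      rcases lt_or_eq_of_le (hf.1 _ (Nat.cast_nonneg (h₁ K))) with hlt | heq
      · exact hlt
      · exfalso
        rw [← heq, div_zero] at hr
        have : (0:ℝ) ≤ (n:ℝ) := Nat.cast_nonneg n
        linarith
    exact (lt_div_iff₀ hd).1 hr
  obtain ⟨seq, hseq⟩ : ∃ s : ℕ → ℕ, ∀ n, s n < s (n+1) ∧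
      ((n:ℝ)+1) * f (h₁ (s (n+1)) : ℝ) < f (h₀ (s (n+1)) : ℝ) ∧
      ((n:ℝ)+1) * f (h₀ (s n) : ℝ) < f (h₀ (s (n+1)) : ℝ) := by
    choose F hF1 hF2 hF3 using exkey
    exact ⟨fun n => Nat.rec 0 (fun n prev => F n prev) n,
      fun n => ⟨hF1 n _, hF2 n _, hF3 n _⟩⟩
  have sm : StrictMono seq := strictMono_nat_of_lt_succ fun n => (hseq n).1
  have qtop : Tendsto (fun k => min (h₀ k) (h₁ k)) atTop atTop := by
    rw [tendsto_atTop]; intro b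
    filter_upwards [tendsto_atTop.1 top₀ b, tendsto_atTop.1 top₁ b] with k u v
    exact le_min u v
  have qpos : ∀ᶠ k in atTop, 1 ≤ min (h₀ k) (h₁ k) := tendsto_atTop.1 qtop 1
  have mixmono : ∀ x : ℕ → Bool, Monotone (mixfun h₀ h₁ seq (ADset x)) :=
    fun x => (mono₀.min mono₁).max (wfun_mono _ _ _)
  have mixtop : ∀ x : ℕ → Bool, Tendsto (mixfun h₀ h₁ seq (ADset x)) atTop atTop :=
    fun x => tendsto_atTop_mono (fun k => le_max_left _ _) qtop
  have mixle : ∀ (x : ℕ → Bool) k, mixfun h₀ h₁ seq (ADset x) k ≤ h₀ k :=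
    fun x k => max_le (min_le_left _ _) (wfun_le _ _ _ mono₀ k)
  have mixnt : ∀ x : ℕ → Bool,
      ¬ Tendsto (fun k : ℕ => (k:ℝ) / (mixfun h₀ h₁ seq (ADset x) k : ℝ)) atTop (nhds 0) := by
    intro x T
    apply nt₀
    refine squeeze_zero' (Eventually.of_forall fun k =>
      div_nonneg (Nat.cast_nonneg _) (Nat.cast_nonneg _)) ?_ T
    filter_upwards [qpos] with k hk
    have h1 : (0:ℝ) < (mixfun h₀ h₁ seq (ADset x) k : ℝ) := by
      have : 1 ≤ mixfun h₀ h₁ seq (ADset x) k := le_trans hk (le_max_left _ _)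
      exact_mod_cast Nat.lt_of_lt_of_le Nat.zero_lt_one this
    exact div_le_div_of_nonneg_left (Nat.cast_nonneg _) h1 (Nat.cast_le.2 (mixle x k))
  have mixZ : ∀ x : ℕ → Bool, ZgfN f g = ZgfN f (mixfun h₀ h₁ seq (ADset x)) := by
    intro x
    have zq : ZgfN f g ⊆ ZgfN f (fun k => min (h₀ k) (h₁ k)) := Zmin hf e₀ e₁
    have z1 : ZgfN f (fun k => min (h₀ k) (h₁ k)) ⊆ ZgfN f (mixfun h₀ h₁ seq (ADset x)) :=
      Zsub hf (fun k => le_max_left _ _) qtop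
    have z2 : ZgfN f (mixfun h₀ h₁ seq (ADset x)) ⊆ ZgfN f h₀ :=
      Zsub hf (mixle x) (mixtop x)
    exact Set.Subset.antisymm (zq.trans z1) (by rw [e₀]; exact z2)
  let P : (ℕ → Bool) → SfgCarrier f g :=
    fun x => ⟨mixfun h₀ h₁ seq (ADset x), ⟨mixmono x, mixtop x, mixnt x⟩, mixZ x⟩
  have inj : Function.Injective fun x => Quot.mk (Rrel f g) (P x) := by
    intro x y hxy
    by_contra hne
    have hinf := ADset_diff_infinite hne
    have hrel : Rrel f g (P x) (P y) :=
      ((rrel_equiv f g hf).eqvGen_iff).1 (Quot.eq.1 hxy)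
    obtain ⟨b, hb⟩ := hrel.1
    rw [eventually_map, eventually_atTop] at hb
    obtain ⟨N, hN⟩ := hb
    obtain ⟨k₁, hk₁⟩ := eventually_atTop.1 qpos
    obtain ⟨n, hnmem, hngt⟩ := hinf.exists_gt (max (max N k₁) (⌈b⌉₊ + 1))
    have hN' : N < n := lt_of_le_of_lt (le_trans (le_max_left _ _) (le_max_left _ _)) hngt
    have hk₁' : k₁ < n := lt_of_le_of_lt (le_trans (le_max_right _ _) (le_max_left _ _)) hngt
    have hbn' : ⌈b⌉₊ + 1 ≤ n := le_of_lt (lt_of_le_of_lt (le_max_right _ _) hngt)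
    have h1n : 1 ≤ n := by omega
    have hnK : n ≤ seq n := sm.le_apply
    have hqK : 1 ≤ min (h₀ (seq n)) (h₁ (seq n)) := hk₁ (seq n) (by omega)
    have hypos : (0:ℝ) < f ((mixfun h₀ h₁ seq (ADset y) (seq n) : ℕ) : ℝ) := by
      refine fpos hf (Nat.cast_pos.2 ?_)
      exact Nat.lt_of_lt_of_le Nat.zero_lt_one (le_trans hqK (le_max_left _ _))
    have hn1 : n - 1 + 1 = n := Nat.succ_pred_eq_of_pos h1n
    have hcast : ((n-1 : ℕ) : ℝ) + 1 = (n : ℝ) := by exact_mod_cast congrArg (Nat.cast : ℕ → ℝ) hn1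
    obtain ⟨-, hA, hB⟩ := hseq (n-1)
    rw [hn1] at hA hB
    rw [hcast] at hA hB
    -- hA : (n:ℝ) * f (h₁ (seq n)) < f (h₀ (seq n)); hB : same with h₀ (seq (n-1))
    have hwy : wfun h₀ seq (ADset y) (seq n) ≤ h₀ (seq (n-1)) :=
      wfun_le_of_notMem _ _ _ sm mono₀ hnmem.2 h1n
    have hyle : mixfun h₀ h₁ seq (ADset y) (seq n) ≤ max (h₁ (seq n)) (h₀ (seq (n-1))) :=
      max_le_max (min_le_right _ _) hwy
    have hkey : (n:ℝ) * f ((mixfun h₀ h₁ seq (ADset y) (seq n) : ℕ) : ℝ) < f ((h₀ (seq n) : ℕ) : ℝ) := by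
      rcases max_cases (h₁ (seq n)) (h₀ (seq (n-1))) with ⟨hm, -⟩ | ⟨hm, -⟩
      · have hle : f ((mixfun h₀ h₁ seq (ADset y) (seq n) : ℕ) : ℝ) ≤ f ((h₁ (seq n) : ℕ) : ℝ) :=
          fmono' hf (Nat.cast_nonneg _) (Nat.cast_le.2 (hyle.trans_eq hm))
        exact lt_of_le_of_lt (mul_le_mul_of_nonneg_left hle (Nat.cast_nonneg n)) hA
      · have hle : f ((mixfun h₀ h₁ seq (ADset y) (seq n) : ℕ) : ℝ) ≤ f ((h₀ (seq (n-1)) : ℕ) : ℝ) :=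
          fmono' hf (Nat.cast_nonneg _) (Nat.cast_le.2 (hyle.trans_eq hm))
        exact lt_of_le_of_lt (mul_le_mul_of_nonneg_left hle (Nat.cast_nonneg n)) hB
    have hnum : f ((h₀ (seq n) : ℕ) : ℝ) ≤ f ((mixfun h₀ h₁ seq (ADset x) (seq n) : ℕ) : ℝ) :=
      fmono' hf (Nat.cast_nonneg _) (Nat.cast_le.2
        (le_trans (le_wfun h₀ seq _ sm hnmem.1 le_rfl) (le_max_right _ _)))
    have hfin : b < f ((mixfun h₀ h₁ seq (ADset x) (seq n) : ℕ) : ℝ) /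
        f ((mixfun h₀ h₁ seq (ADset y) (seq n) : ℕ) : ℝ) := by
      have h2 : (n:ℝ) < f ((mixfun h₀ h₁ seq (ADset x) (seq n) : ℕ) : ℝ) /
          f ((mixfun h₀ h₁ seq (ADset y) (seq n) : ℕ) : ℝ) :=
        (lt_div_iff₀ hypos).2 (lt_of_lt_of_le hkey hnum)
      have hbn : b < (n:ℝ) :=
        lt_of_le_of_lt (Nat.le_ceil b) (by exact_mod_cast (by omega : ⌈b⌉₊ < n))
      exact hbn.trans h2
    exact absurd (hN (seq n) (by omega)) (not_le.2 hfin)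
  have hle := Cardinal.mk_le_of_injective inj
  calc Cardinal.continuum = Cardinal.mk (ℕ → Bool) := by
        rw [← Cardinal.power_def, Cardinal.mk_bool, Cardinal.mk_nat, Cardinal.two_power_aleph0]
    _ ≤ _ := hle

theorem stmt6 (f : ℝ → ℝ) (g : ℕ → ℕ) (hf : IsModulus f) (hfu : IsUnboundedMod f)
    (hg : InHup g) (hcard : 1 < Cardinal.mk (Quot (Rrel f g))) :
    Cardinal.mk (Quot (Rrel f g)) = Cardinal.continuum := by
  have hupper : Cardinal.mk (Quot (Rrel f g)) ≤ Cardinal.continuum := by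
    refine le_trans Cardinal.mk_quot_le (le_trans (Cardinal.mk_subtype_le _) ?_)
    rw [← Cardinal.power_def, Cardinal.mk_nat, Cardinal.power_self_eq le_rfl,
      Cardinal.two_power_aleph0]
  refine le_antisymm hupper ?_
  rw [Cardinal.one_lt_iff_nontrivial] at hcard
  obtain ⟨qa, qb, hq⟩ := hcard.exists_pair_ne
  obtain ⟨a, rfl⟩ := Quot.exists_rep qa
  obtain ⟨b, rfl⟩ := Quot.exists_rep qb
  have hnab : ¬ Rrel f g a b := fun hr => hq (Quot.sound hr)
  have hfreq : ∀ (u v : SfgCarrier f g),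
      ¬ IsBoundedUnder (· ≤ ·) atTop (fun k => f (u.1 k : ℝ) / f (v.1 k : ℝ)) →
      ∀ c : ℝ, ∃ᶠ k in atTop, c < f (u.1 k : ℝ) / f (v.1 k : ℝ) := by
    intro u v hnb c
    by_contra hcon
    refine hnb ⟨c, ?_⟩
    rw [eventually_map]
    exact (not_frequently.1 hcon).mono fun k hk => not_lt.1 hk
  rcases not_and_or.1 hnab with hnb | hnb
  · exact lower_bound f g hf hfu a.1 b.1 a.2.1 b.2.1 a.2.2 b.2.2 (hfreq a b hnb)
  · exact lower_bound f g hf hfu b.1 a.1 b.2.1 a.2.1 b.2.2 a.2.2 (hfreq b a hnb)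
end

section
/- Let g ∈ H↑ (a nondecreasing ℕ-valued weight function) and let f be an unbounded modulus function. If there exist l ∈ ℕ and a strictly increasing sequence {k_m}_{m∈ℕ} of natural numbers such that lim_{m→∞} f(g(k_m + l))/f(g(k_m)) = ∞, then the quotient set S_f(g) has cardinality 𝔠 (the cardinality of the continuum). -/
open Filter Topology

namespace Stmt8Aux

lemma mod_nonneg {f : ℝ → ℝ} (hf : IsModulus f) {x : ℝ} (hx : 0 ≤ x) : 0 ≤ f x := hf.1 x hx

lemma mod_pos {f : ℝ → ℝ} (hf : IsModulus f) {x : ℝ} (hx : 0 < x) : 0 < f x := by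
  rcases lt_or_eq_of_le (mod_nonneg hf hx.le) with h | h
  · exact h
  · exact absurd ((hf.2.2.2.1 x hx.le).1 h.symm) (ne_of_gt hx)

lemma mod_mono {f : ℝ → ℝ} (hf : IsModulus f) {x y : ℝ} (hx : 0 ≤ x) (hxy : x ≤ y) :
    f x ≤ f y := hf.2.1 hx (hx.trans hxy) hxy

lemma tendsto_f_atTop {f : ℝ → ℝ} (hf : IsModulus f) (hfu : IsUnboundedMod f)
    {u : ℕ → ℕ} (hu : Tendsto u atTop atTop) :
    Tendsto (fun k => f (u k : ℝ)) atTop atTop := by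
  rw [tendsto_atTop]
  intro M
  obtain ⟨x, hx0, hxM⟩ := hfu M
  filter_upwards [hu.eventually_ge_atTop ⌈x⌉₊] with k hk
  exact le_of_lt (lt_of_lt_of_le hxM (mod_mono hf hx0
    (le_trans (Nat.le_ceil x) (by exact_mod_cast hk))))

lemma fpos_ev {f : ℝ → ℝ} (hf : IsModulus f) {u : ℕ → ℕ} (hu : Tendsto u atTop atTop) :
    ∀ᶠ k in atTop, 0 < f (u k : ℝ) := by
  filter_upwards [hu.eventually_ge_atTop 1] with k hk
  exact lt_of_lt_of_le (mod_pos hf one_pos) (mod_mono hf zero_le_one (by exact_mod_cast hk))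

lemma cnt_add_le (C : Set ℕ) (k l : ℕ) : cnt C (k + l) ≤ cnt C k + l := by
  have hsub : C ∩ Set.Iio (k + l) ⊆ (C ∩ Set.Iio k) ∪ Set.Ico k (k + l) := by
    intro n hn
    rcases lt_or_ge n k with h | h
    · exact Or.inl ⟨hn.1, h⟩
    · exact Or.inr ⟨h, hn.2⟩
  have hfin : ((C ∩ Set.Iio k) ∪ Set.Ico k (k + l)).Finite :=
    ((Set.finite_Iio k).inter_of_right _).union (Set.finite_Ico _ _)
  have h1 : cnt C (k + l) ≤ ((C ∩ Set.Iio k) ∪ Set.Ico k (k + l)).ncard :=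
    Set.ncard_le_ncard hsub hfin
  have h2 : ((C ∩ Set.Iio k) ∪ Set.Ico k (k + l)).ncard ≤
      (C ∩ Set.Iio k).ncard + (Set.Ico k (k + l)).ncard := Set.ncard_union_le _ _
  have h3 : (Set.Ico k (k + l)).ncard = l := by
    rw [← Finset.coe_Ico, Set.ncard_coe_finset, Nat.card_Ico]; omega
  unfold cnt at h1 ⊢; omega

open Classical in
/-- Modification of `g`: on each interval `[K j, K j + l)` with `j ∈ A`, take the value
`g (K j + l)`; elsewhere `g`. -/
noncomputable def modf (g K : ℕ → ℕ) (l : ℕ) (A : Set ℕ) (k : ℕ) : ℕ :=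
  if h : ∃ j, j ∈ A ∧ K j ≤ k ∧ k < K j + l then g (K h.choose + l) else g k

section
variable {g K : ℕ → ℕ} {l : ℕ}

lemma Kmono (hsp : ∀ j, K j + l + 1 ≤ K (j + 1)) : Monotone K :=
  monotone_nat_of_le_succ fun j => by have := hsp j; omega

lemma Kstrict (hsp : ∀ j, K j + l + 1 ≤ K (j + 1)) : StrictMono K :=
  strictMono_nat_of_lt_succ fun j => by have := hsp j; omega

lemma Kgap (hsp : ∀ j, K j + l + 1 ≤ K (j + 1)) {j j' : ℕ} (h : j < j') :
    K j + l < K j' := by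
  have h1 := hsp j
  have h2 := Kmono hsp (show j + 1 ≤ j' from h)
  omega

lemma interval_unique (hsp : ∀ j, K j + l + 1 ≤ K (j + 1)) {j j' k : ℕ}
    (h1 : K j ≤ k ∧ k < K j + l) (h2 : K j' ≤ k ∧ k < K j' + l) : j = j' := by
  rcases lt_trichotomy j j' with h | h | h
  · have := Kgap hsp h; omega
  · exact h
  · have := Kgap hsp h; omega

lemma modf_eq_mem (hsp : ∀ j, K j + l + 1 ≤ K (j + 1)) {A : Set ℕ} {j k : ℕ}
    (hj : j ∈ A) (h1 : K j ≤ k) (h2 : k < K j + l) :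
    modf g K l A k = g (K j + l) := by
  have hex : ∃ j, j ∈ A ∧ K j ≤ k ∧ k < K j + l := ⟨j, hj, h1, h2⟩
  rw [modf, dif_pos hex]
  have hc := hex.choose_spec
  rw [interval_unique hsp ⟨hc.2.1, hc.2.2⟩ ⟨h1, h2⟩]

lemma modf_eq_notMem {A : Set ℕ} {k : ℕ}
    (h : ¬ ∃ j, j ∈ A ∧ K j ≤ k ∧ k < K j + l) : modf g K l A k = g k := dif_neg h

lemma le_modf (hgm : Monotone g) (A : Set ℕ) (k : ℕ) : g k ≤ modf g K l A k := by
  rw [modf]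
  split_ifs with h
  · exact hgm (Nat.le_of_lt h.choose_spec.2.2)
  · exact le_rfl

lemma modf_le (hgm : Monotone g) (A : Set ℕ) (k : ℕ) : modf g K l A k ≤ g (k + l) := by
  rw [modf]
  split_ifs with h
  · exact hgm (by have := h.choose_spec.2.1; omega)
  · exact hgm (by omega)

lemma modf_mono (hsp : ∀ j, K j + l + 1 ≤ K (j + 1)) (hgm : Monotone g) (A : Set ℕ) :
    Monotone (modf g K l A) := by
  apply monotone_nat_of_le_succ
  intro k
  by_cases hk : ∃ j, j ∈ A ∧ K j ≤ k ∧ k < K j + l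
  · obtain ⟨j, hj, h1, h2⟩ := hk
    by_cases hk1 : ∃ j', j' ∈ A ∧ K j' ≤ k + 1 ∧ k + 1 < K j' + l
    · obtain ⟨j', hj', h1', h2'⟩ := hk1
      have hjj : j = j' := by
        rcases lt_trichotomy j j' with h | h | h
        · have := Kgap hsp h; omega
        · exact h
        · have := Kgap hsp h; omega
      rw [modf_eq_mem hsp hj h1 h2, modf_eq_mem hsp hj' h1' h2', hjj]
    · rw [modf_eq_mem hsp hj h1 h2, modf_eq_notMem hk1]
      have : ¬ (K j ≤ k + 1 ∧ k + 1 < K j + l) := fun hc => hk1 ⟨j, hj, hc⟩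
      exact hgm (by omega)
  · rw [modf_eq_notMem hk]
    by_cases hk1 : ∃ j', j' ∈ A ∧ K j' ≤ k + 1 ∧ k + 1 < K j' + l
    · obtain ⟨j', hj', h1', h2'⟩ := hk1
      rw [modf_eq_mem hsp hj' h1' h2']
      exact hgm (by omega)
    · rw [modf_eq_notMem hk1]; exact hgm (by omega)

lemma modf_apply_mem (hsp : ∀ j, K j + l + 1 ≤ K (j + 1)) (hl : 1 ≤ l) {A : Set ℕ}
    {j : ℕ} (hj : j ∈ A) : modf g K l A (K j) = g (K j + l) :=
  modf_eq_mem hsp hj le_rfl (by omega)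

lemma modf_apply_notMem (hsp : ∀ j, K j + l + 1 ≤ K (j + 1)) {A : Set ℕ}
    {j : ℕ} (hj : j ∉ A) : modf g K l A (K j) = g (K j) := by
  apply modf_eq_notMem
  rintro ⟨j', hj', h1, h2⟩
  rcases lt_trichotomy j' j with h | h | h
  · have := Kgap hsp h; omega
  · exact hj (h ▸ hj')
  · have := Kgap hsp h; omega

lemma pred_notMem (hsp : ∀ j, K j + l + 1 ≤ K (j + 1)) {A : Set ℕ} {j : ℕ}
    (hj1 : 1 ≤ K j) : modf g K l A (K j - 1) = g (K j - 1) := by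
  apply modf_eq_notMem
  rintro ⟨j', _, h1, h2⟩
  rcases lt_trichotomy j' j with h | h | h
  · have := Kgap hsp h; omega
  · subst h; omega
  · have := Kstrict hsp h; omega

lemma weight_transfer (hsp : ∀ j, K j + l + 1 ≤ K (j + 1)) (hgm : Monotone g)
    (hgt : Tendsto g atTop atTop) (A : Set ℕ)
    (ht : Tendsto (fun k : ℕ => (k : ℝ) / (modf g K l A k : ℝ)) atTop (nhds 0)) :
    Tendsto (fun k : ℕ => (k : ℝ) / (g k : ℝ)) atTop (nhds 0) := by
  rw [Metric.tendsto_atTop] at ht ⊢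
  intro ε hε
  obtain ⟨N₀, hN₀⟩ := ht (ε / 2) (by positivity)
  have hgc : Tendsto (fun k => (g k : ℝ)) atTop atTop :=
    tendsto_natCast_atTop_atTop.comp hgt
  obtain ⟨N₁, hN₁⟩ := (tendsto_atTop.mp hgc (2 * l / ε + 1)).exists_forall_of_atTop
  refine ⟨N₀ + N₁ + l + 1, fun k hk => ?_⟩
  rw [Real.dist_eq, sub_zero, abs_of_nonneg (by positivity)]
  by_cases hex : ∃ j, j ∈ A ∧ K j ≤ k ∧ k < K j + l
  · obtain ⟨j, hj, h1, h2⟩ := hex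
    have hKj : 1 ≤ K j := by omega
    have hp1 : N₀ ≤ K j - 1 := by omega
    have hp2 : N₁ ≤ K j - 1 := by omega
    have hpk : K j - 1 ≤ k := by omega
    have hkpl : k ≤ (K j - 1) + l := by omega
    have hmod : modf g K l A (K j - 1) = g (K j - 1) := pred_notMem hsp hKj
    have hgp : (2 * l / ε + 1 : ℝ) ≤ g (K j - 1) := hN₁ _ hp2
    have hgppos : (0 : ℝ) < g (K j - 1) := lt_of_lt_of_le (by positivity) hgp
    have hd := hN₀ _ hp1
    rw [Real.dist_eq, sub_zero, abs_of_nonneg (by positivity), hmod] at hd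
    have hgk : (g (K j - 1) : ℝ) ≤ g k := by exact_mod_cast hgm hpk
    calc (k : ℝ) / g k ≤ (k : ℝ) / g (K j - 1) := by gcongr
      _ ≤ ((K j - 1 : ℕ) + l : ℝ) / g (K j - 1) := by
          gcongr
          exact_mod_cast hkpl
      _ = ((K j - 1 : ℕ) : ℝ) / g (K j - 1) + (l : ℝ) / g (K j - 1) := add_div _ _ _
      _ < ε / 2 + ε / 2 := by
          apply add_lt_add_of_lt_of_le hd
          have h5 : 2 * (l : ℝ) / ε ≤ g (K j - 1) := by linarith
          have h6 : 2 * (l : ℝ) ≤ (g (K j - 1) : ℝ) * ε := (div_le_iff₀ hε).mp h5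
          rw [div_le_iff₀ hgppos]
          nlinarith [h6, hε]
      _ = ε := add_halves ε
  · have hd := hN₀ k (by omega)
    rw [Real.dist_eq, sub_zero, abs_of_nonneg (by positivity), modf_eq_notMem hex] at hd
    linarith

end

lemma Z_eq {f : ℝ → ℝ} (hf : IsModulus f) (hfu : IsUnboundedMod f) {g h : ℕ → ℕ} {l : ℕ}
    (hgt : Tendsto g atTop atTop)
    (hh1 : ∀ k, g k ≤ h k) (hh2 : ∀ k, h k ≤ g (k + l)) : ZgfN f g = ZgfN f h := by
  have hht : Tendsto h atTop atTop := tendsto_atTop_mono hh1 hgt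
  ext C
  simp only [ZgfN, Set.mem_setOf_eq]
  constructor
  · intro hC
    apply squeeze_zero' (Eventually.of_forall fun k =>
      div_nonneg (mod_nonneg hf (Nat.cast_nonneg _)) (mod_nonneg hf (Nat.cast_nonneg _)))
      ?_ hC
    filter_upwards [fpos_ev hf hgt] with k hk
    gcongr
    · exact mod_nonneg hf (Nat.cast_nonneg _)
    · exact mod_mono hf (Nat.cast_nonneg _) (Nat.cast_le.mpr (hh1 k))
  · intro hC
    have h1 : Tendsto (fun k => f (cnt C (k - l) : ℝ) / f (h (k - l) : ℝ)) atTop (nhds 0) :=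
      hC.comp (tendsto_sub_atTop_nat l)
    have h2 : Tendsto (fun k => f (l : ℝ) / f (g k : ℝ)) atTop (nhds 0) :=
      Tendsto.div_atTop tendsto_const_nhds (tendsto_f_atTop hf hfu hgt)
    apply squeeze_zero' (Eventually.of_forall fun k =>
      div_nonneg (mod_nonneg hf (Nat.cast_nonneg _)) (mod_nonneg hf (Nat.cast_nonneg _)))
      ?_ (by simpa using h1.add h2)
    filter_upwards [eventually_ge_atTop l, (tendsto_sub_atTop_nat l).eventually
      (hht.eventually_ge_atTop 1), fpos_ev hf hgt] with k hkl hh1' hgp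
    have hhp : (0 : ℝ) < f (h (k - l) : ℝ) :=
      lt_of_lt_of_le (mod_pos hf one_pos) (mod_mono hf zero_le_one (by exact_mod_cast hh1'))
    have e1 : cnt C k ≤ cnt C (k - l) + l := by
      have := cnt_add_le C (k - l) l
      rwa [Nat.sub_add_cancel hkl] at this
    have e2 : f (cnt C k : ℝ) ≤ f (cnt C (k - l) : ℝ) + f (l : ℝ) := by
      refine le_trans (mod_mono hf (Nat.cast_nonneg _) ?_)
        (hf.2.2.1 _ _ (Nat.cast_nonneg _) (Nat.cast_nonneg _))
      exact_mod_cast e1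
    have e3 : f (h (k - l) : ℝ) ≤ f (g k : ℝ) := by
      apply mod_mono hf (Nat.cast_nonneg _)
      have := hh2 (k - l)
      rw [Nat.sub_add_cancel hkl] at this
      exact_mod_cast this
    calc f (cnt C k : ℝ) / f (g k : ℝ)
        ≤ (f (cnt C (k - l) : ℝ) + f (l : ℝ)) / f (g k : ℝ) := by gcongr
      _ = f (cnt C (k - l) : ℝ) / f (g k : ℝ) + f (l : ℝ) / f (g k : ℝ) := add_div _ _ _
      _ ≤ f (cnt C (k - l) : ℝ) / f (h (k - l) : ℝ) + f (l : ℝ) / f (g k : ℝ) := by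
          gcongr
          exact mod_nonneg hf (Nat.cast_nonneg _)

lemma bdd_trans {f : ℝ → ℝ} (hf : IsModulus f) {a b c : ℕ → ℕ}
    (ha : Tendsto a atTop atTop) (hb : Tendsto b atTop atTop) (hc : Tendsto c atTop atTop)
    (h1 : IsBoundedUnder (· ≤ ·) atTop (fun k => f (a k : ℝ) / f (b k : ℝ)))
    (h2 : IsBoundedUnder (· ≤ ·) atTop (fun k => f (b k : ℝ) / f (c k : ℝ))) :
    IsBoundedUnder (· ≤ ·) atTop (fun k => f (a k : ℝ) / f (c k : ℝ)) := by
  obtain ⟨b1, hb1⟩ := h1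
  obtain ⟨b2, hb2⟩ := h2
  rw [eventually_map] at hb1 hb2
  refine ⟨b1 * b2, eventually_map.mpr ?_⟩
  filter_upwards [hb1, hb2, fpos_ev hf ha, fpos_ev hf hb, fpos_ev hf hc]
    with k e1 e2 p1 p2 p3
  have heq : f (a k : ℝ) / f (c k : ℝ) = (f (a k : ℝ) / f (b k : ℝ)) * (f (b k : ℝ) / f (c k : ℝ)) := by
    field_simp
  rw [heq]
  exact mul_le_mul e1 e2 (div_nonneg p2.le p3.le) (le_trans (div_nonneg p1.le p2.le) e1)

lemma Rrel_equiv {f : ℝ → ℝ} {g : ℕ → ℕ} (hf : IsModulus f) : Equivalence (Rrel f g) := by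
  constructor
  · intro h
    have : IsBoundedUnder (· ≤ ·) atTop (fun k => f (h.1 k : ℝ) / f (h.1 k : ℝ)) := by
      refine isBoundedUnder_of ⟨1, fun k => ?_⟩
      rcases eq_or_ne (f (h.1 k : ℝ)) 0 with h0 | h0
      · simp [h0]
      · rw [div_self h0]
    exact ⟨this, this⟩
  · rintro x y ⟨u, v⟩; exact ⟨v, u⟩
  · rintro x y z ⟨u1, u2⟩ ⟨v1, v2⟩
    exact ⟨bdd_trans hf x.2.1.2.1 y.2.1.2.1 z.2.1.2.1 u1 v1,
      bdd_trans hf z.2.1.2.1 y.2.1.2.1 x.2.1.2.1 v2 u2⟩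

lemma not_bdd {f : ℝ → ℝ} {g K : ℕ → ℕ} {l : ℕ}
    (hsp : ∀ j, K j + l + 1 ≤ K (j + 1)) (hl : 1 ≤ l)
    (hlimK : Tendsto (fun n => f (g (K n + l) : ℝ) / f (g (K n) : ℝ)) atTop atTop)
    {A B : Set ℕ} {i : ℕ} (hiA : ∀ j, Nat.pair i j ∈ A) (hiB : ∀ j, Nat.pair i j ∉ B) :
    ¬ IsBoundedUnder (· ≤ ·) atTop
      (fun k => f (modf g K l A k : ℝ) / f (modf g K l B k : ℝ)) := by
  rintro ⟨b, hb⟩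
  rw [eventually_map] at hb
  have hpair : StrictMono (fun j : ℕ => Nat.pair i j) := fun _ _ h =>
    Nat.pair_lt_pair_right i h
  have hsT : Tendsto (fun j => K (Nat.pair i j)) atTop atTop :=
    ((Kstrict hsp).comp hpair).tendsto_atTop
  have hbs := hsT.eventually hb
  have hgt := (hlimK.comp hpair.tendsto_atTop).eventually_gt_atTop b
  obtain ⟨j, h1, h2⟩ := (hbs.and hgt).exists
  rw [modf_apply_mem hsp hl (hiA j), modf_apply_notMem hsp (hiB j)] at h1
  exact absurd h1 (not_le.mpr h2)

end Stmt8Aux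

open Stmt8Aux in
theorem stmt8 (f : ℝ → ℝ) (g : ℕ → ℕ) (hf : IsModulus f) (hfu : IsUnboundedMod f)
    (hg : InHup g) (l : ℕ) (km : ℕ → ℕ) (hkm : StrictMono km)
    (hlim : Tendsto (fun m => f (g (km m + l) : ℝ) / f (g (km m) : ℝ)) atTop atTop) :
    Cardinal.mk (Quot (Rrel f g)) = Cardinal.continuum := by
  classical
  rcases Nat.eq_zero_or_pos l with rfl | hl
  · exfalso
    obtain ⟨m, hm⟩ := (hlim.eventually_ge_atTop 2).exists
    simp only [add_zero] at hm
    rcases eq_or_ne (f (g (km m) : ℝ)) 0 with h0 | h0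
    · rw [h0, div_zero] at hm; linarith
    · rw [div_self h0] at hm; linarith
  -- the spaced subsequence
  set K : ℕ → ℕ := fun j => km (j * (l + 1)) with hK
  have hkm_add : ∀ a n : ℕ, km a + n ≤ km (a + n) := by
    intro a n
    induction n with
    | zero => simp
    | succ n ih =>
        have h1 := hkm (Nat.lt_succ_self (a + n))
        have h2 : (a + n).succ = a + (n + 1) := rfl
        rw [h2] at h1
        omega
  have hsp : ∀ j, K j + l + 1 ≤ K (j + 1) := by
    intro j
    have h1 : km (j * (l + 1)) + (l + 1) ≤ km (j * (l + 1) + (l + 1)) := hkm_add _ _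
    have h2 : (j + 1) * (l + 1) = j * (l + 1) + (l + 1) := by ring
    simp only [hK, h2]
    omega
  have hidx : StrictMono (fun j : ℕ => j * (l + 1)) := fun a b h =>
    (Nat.mul_lt_mul_right (Nat.succ_pos l)).mpr h
  have hlimK : Tendsto (fun n => f (g (K n + l) : ℝ) / f (g (K n) : ℝ)) atTop atTop :=
    hlim.comp hidx.tendsto_atTop
  -- the family
  set Ahat : Set ℕ → Set ℕ := fun A => {n : ℕ | (Nat.unpair n).1 ∈ A} with hAhat
  have hmemA : ∀ (A : Set ℕ) (i j : ℕ), i ∈ A → Nat.pair i j ∈ Ahat A := by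
    intro A i j hi; simp [hAhat, Nat.unpair_pair, hi]
  have hmemA' : ∀ (A : Set ℕ) (i j : ℕ), i ∉ A → Nat.pair i j ∉ Ahat A := by
    intro A i j hi; simp [hAhat, Nat.unpair_pair, hi]
  let HH : Set ℕ → SfgCarrier f g := fun A =>
    ⟨modf g K l (Ahat A),
      ⟨⟨modf_mono hsp hg.1 _, tendsto_atTop_mono (le_modf hg.1 _) hg.2.1,
        fun hcon => hg.2.2 (weight_transfer hsp hg.1 hg.2.1 _ hcon)⟩,
        Z_eq hf hfu hg.2.1 (le_modf hg.1 _) (modf_le hg.1 _)⟩⟩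
  have hinj : Function.Injective (fun A => Quot.mk (Rrel f g) (HH A)) := by
    intro A B hAB
    by_contra hne
    have hex : ∃ i, (i ∈ A ∧ i ∉ B) ∨ (i ∈ B ∧ i ∉ A) := by
      by_contra hc
      push_neg at hc
      exact hne (Set.ext fun i => ⟨fun hi => by
        have := hc i; tauto, fun hi => by have := hc i; tauto⟩)
    obtain ⟨i, hi⟩ := hex
    have hR : Rrel f g (HH A) (HH B) :=
      ((Rrel_equiv hf).eqvGen_iff).mp (Quot.eq.mp hAB)
    rcases hi with ⟨hiA, hiB⟩ | ⟨hiB, hiA⟩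
    · exact not_bdd hsp hl hlimK (hmemA A i · hiA) (hmemA' B i · hiB) hR.1
    · exact not_bdd hsp hl hlimK (hmemA B i · hiB) (hmemA' A i · hiA) hR.2
  apply le_antisymm
  · calc Cardinal.mk (Quot (Rrel f g)) ≤ Cardinal.mk (SfgCarrier f g) := Cardinal.mk_quot_le
      _ ≤ Cardinal.mk (ℕ → ℕ) :=
          Cardinal.mk_le_of_injective (f := fun h : SfgCarrier f g => h.1)
            (fun a b hab => Subtype.ext hab)
      _ = Cardinal.mk ℕ ^ Cardinal.mk ℕ := (Cardinal.power_def ℕ ℕ).symm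
      _ = Cardinal.continuum := by
          rw [Cardinal.mk_nat, Cardinal.aleph0_power_aleph0]
  · have hle : Cardinal.mk (Set ℕ) ≤ Cardinal.mk (Quot (Rrel f g)) :=
      Cardinal.mk_le_of_injective hinj
    rwa [Cardinal.mk_set, Cardinal.mk_nat, Cardinal.two_power_aleph0] at hle
end

section
/- Let g ∈ H↑ (a nondecreasing ℕ-valued weight function) and let f be an unbounded modulus function. Set k_0 = 0 and, for m ≥ 1, k_m = min{k ∈ ℕ : f(g(k)) ≥ 2^m}. Then Z_g(f) = {C ⊆ ℕ : lim_{m→∞} f(|C ∩ [k_m, k_{m+1})|)/f(g(k_m)) = 0}. -/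
/-!
Write `F k = f (g k)`; by minimality of `k_m`, `2^m ≤ F k < 2^(m+1)` on the block
`[k_m, k_{m+1})`, so along blocks the denominator `f (g k)` is comparable to `2^m`.
If `C ∈ Z_g(f)`, the count of `C` in block `m` is at most `|C ∩ [0, k_{m+1})|`, and evaluating
at `k = k_{m+1} - 1` (where `F k < 2 · F (k_m)`) gives the block condition.
Conversely, subadditivity of `f` bounds `f |C ∩ [0, k)|` by the sum of the block terms
`f |C ∩ [k_j, k_{j+1})| = o(2^j)` over `j ≤ m`, and a sum of `o(2^j)` terms up to `m` is `o(2^m)`.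
-/

open Filter Topology

open Finset

namespace IsModulus

variable {f : ℝ → ℝ}

lemma nonneg_s9 (hf : IsModulus f) {x : ℝ} (hx : 0 ≤ x) : 0 ≤ f x := hf.1 x hx

lemma map_zero (hf : IsModulus f) : f 0 = 0 := (hf.2.2.2.1 0 le_rfl).mpr rfl

lemma mono_s9 (hf : IsModulus f) {x y : ℝ} (hx : 0 ≤ x) (hxy : x ≤ y) : f x ≤ f y :=
  hf.2.1 hx (hx.trans hxy) hxy

lemma natCast_nonneg (hf : IsModulus f) (n : ℕ) : 0 ≤ f n := hf.nonneg_s9 (Nat.cast_nonneg n)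

lemma natCast_mono (hf : IsModulus f) {a b : ℕ} (h : a ≤ b) : f a ≤ f b :=
  hf.mono_s9 (Nat.cast_nonneg a) (Nat.cast_le.mpr h)

lemma natCast_add_le (hf : IsModulus f) (a b : ℕ) : f ↑(a + b) ≤ f a + f b := by
  simpa using hf.2.2.1 a b (Nat.cast_nonneg a) (Nat.cast_nonneg b)

lemma natCast_sum_le (hf : IsModulus f) {ι : Type*} (s : Finset ι) (a : ι → ℕ) :
    f ↑(∑ i ∈ s, a i) ≤ ∑ i ∈ s, f (a i) :=
  le_sum_of_subadditive (fun n : ℕ => f n) (by simp [hf.map_zero]) hf.natCast_add_le s a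

lemma tendsto_atTop_atTop (hf : IsModulus f) (hfu : IsUnboundedMod f) :
    Tendsto f atTop atTop := by
  refine Filter.tendsto_atTop.2 fun M => ?_
  obtain ⟨x, hx, hMx⟩ := hfu M
  filter_upwards [eventually_ge_atTop x] with y hy
  exact hMx.le.trans (hf.mono_s9 hx hy)

end IsModulus

lemma tendsto_sum_range_div_two_pow {a : ℕ → ℝ}
    (ha : Tendsto (fun j => a j / 2 ^ j) atTop (𝓝 0)) :
    Tendsto (fun n => (∑ j ∈ range n, a j) / 2 ^ n) atTop (𝓝 0) := by
  have hlo : a =o[atTop] fun j => (2 : ℝ) ^ j :=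
    (Asymptotics.isLittleO_iff_tendsto fun j hj => absurd hj (by positivity)).2 ha
  have hgeom (n : ℕ) : ∑ j ∈ range n, (2 : ℝ) ^ j = 2 ^ n - 1 := by
    rw [geom_sum_eq (by norm_num)]; norm_num
  have hsum := hlo.sum_range (fun j => by positivity) <| by
    simpa only [hgeom, sub_eq_add_neg] using tendsto_atTop_add_const_right _ (-1)
      (tendsto_pow_atTop_atTop_of_one_lt one_lt_two)
  refine (hsum.trans_isBigO (Asymptotics.IsBigO.of_bound 1 ?_)).tendsto_div_nhds_zero
  filter_upwards with n
  simp only [hgeom, Real.norm_eq_abs, one_mul]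
  rw [abs_of_nonneg (by linarith [one_le_pow₀ (M₀ := ℝ) one_le_two (n := n)]),
    abs_of_pos (by positivity)]
  linarith

lemma two_pow_log_floor_le {x : ℝ} (hx : 1 ≤ x) : (2 : ℝ) ^ Nat.log 2 ⌊x⌋₊ ≤ x := by
  have hfloor : ⌊x⌋₊ ≠ 0 := (Nat.floor_pos.mpr hx).ne'
  calc (2 : ℝ) ^ Nat.log 2 ⌊x⌋₊ ≤ ⌊x⌋₊ := by exact_mod_cast Nat.pow_log_le_self 2 hfloor
    _ ≤ x := Nat.floor_le (by linarith)

lemma lt_two_pow_log_floor_succ (x : ℝ) : x < (2 : ℝ) ^ (Nat.log 2 ⌊x⌋₊ + 1) := by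
  calc x < ⌊x⌋₊ + 1 := Nat.lt_floor_add_one x
    _ ≤ (2 : ℝ) ^ (Nat.log 2 ⌊x⌋₊ + 1) := by
      exact_mod_cast Nat.lt_pow_succ_log_self one_lt_two ⌊x⌋₊

lemma tendsto_log_floor_atTop : Tendsto (fun x : ℝ => Nat.log 2 ⌊x⌋₊) atTop atTop := by
  refine Filter.tendsto_atTop.2 fun N => ?_
  filter_upwards [eventually_ge_atTop ((2 : ℝ) ^ N)] with x hx
  exact Nat.le_log_of_pow_le one_lt_two (Nat.le_floor (by exact_mod_cast hx))

lemma Nat.sInf_le_iff_of_monotone {β : Type*} [Preorder β] {F : ℕ → β} (hF : Monotone F)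
    {t : β} (ht : ∃ k, t ≤ F k) (k : ℕ) : sInf {k | t ≤ F k} ≤ k ↔ t ≤ F k :=
  ⟨fun h => le_trans (Nat.sInf_mem ht) (hF h), fun h => Nat.sInf_le h⟩

section Counting

variable (C : Set ℕ)

lemma cnt_mono : Monotone (cnt C) := fun _ b hab =>
  Set.ncard_le_ncard (Set.inter_subset_inter_right C (Set.Iio_subset_Iio hab))
    ((Set.finite_Iio b).inter_of_right C)

lemma ncard_inter_Ico_le_cnt (a b : ℕ) : (C ∩ Set.Ico a b).ncard ≤ cnt C b :=
  Set.ncard_le_ncard (Set.inter_subset_inter_right C Set.Ico_subset_Iio_self)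
    ((Set.finite_Iio b).inter_of_right C)

lemma cnt_le_cnt_add_ncard_inter_Ico (a b : ℕ) :
    cnt C b ≤ cnt C a + (C ∩ Set.Ico a b).ncard := by
  have hsub : C ∩ Set.Iio b ⊆ (C ∩ Set.Iio a) ∪ (C ∩ Set.Ico a b) := by
    rintro n ⟨hn, hnb⟩
    rcases lt_or_ge n a with h | h
    · exact Or.inl ⟨hn, h⟩
    · exact Or.inr ⟨hn, h, hnb⟩
  exact (Set.ncard_le_ncard hsub (((Set.finite_Iio a).inter_of_right C).union
    ((Set.finite_Ico a b).inter_of_right C))).trans (Set.ncard_union_le _ _)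

lemma cnt_succ_le (k : ℕ) : cnt C (k + 1) ≤ cnt C k + 1 := by
  have hsub : C ∩ Set.Ico k (k + 1) ⊆ {k} := fun n ⟨_, hn⟩ => by
    simp only [Set.mem_Ico] at hn
    simp only [Set.mem_singleton_iff]
    omega
  have := (Set.ncard_le_ncard hsub).trans (Set.ncard_singleton k).le
  have := cnt_le_cnt_add_ncard_inter_Ico C k (k + 1)
  omega

lemma cnt_le_cnt_add_sum_ncard_inter_Ico (kk : ℕ → ℕ) (n : ℕ) :
    cnt C (kk n) ≤ cnt C (kk 0) + ∑ j ∈ range n, (C ∩ Set.Ico (kk j) (kk (j + 1))).ncard := by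
  induction n with
  | zero => simp
  | succ n ih =>
    rw [sum_range_succ]
    have := cnt_le_cnt_add_ncard_inter_Ico C (kk n) (kk (n + 1))
    omega

end Counting

lemma tendsto_modulus_cnt_succ_div {f : ℝ → ℝ} {F : ℕ → ℝ} (hf : IsModulus f)
    (hF0 : ∀ k, 0 ≤ F k) (hFtop : Tendsto F atTop atTop) {C : Set ℕ}
    (hC : Tendsto (fun k => f (cnt C k) / F k) atTop (𝓝 0)) :
    Tendsto (fun k => f (cnt C (k + 1)) / F k) atTop (𝓝 0) := by
  have hbound : Tendsto (fun k => f (cnt C k) / F k + f 1 / F k) atTop (𝓝 0) := by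
    simpa using hC.add (tendsto_const_nhds.div_atTop hFtop)
  refine squeeze_zero (fun k => div_nonneg (hf.natCast_nonneg _) (hF0 k)) (fun k => ?_) hbound
  rw [← add_div]
  refine div_le_div_of_nonneg_right ?_ (hF0 k)
  calc f (cnt C (k + 1)) ≤ f ↑(cnt C k + 1) := hf.natCast_mono (cnt_succ_le C k)
    _ ≤ f (cnt C k) + f 1 := by simpa using hf.natCast_add_le (cnt C k) 1

def IsDyadicHittingTimes (F : ℕ → ℝ) (kk : ℕ → ℕ) : Prop :=
  ∀ m : ℕ, 1 ≤ m → kk m = sInf {k : ℕ | (2 : ℝ) ^ m ≤ F k}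

namespace IsDyadicHittingTimes

variable {f : ℝ → ℝ} {F : ℕ → ℝ} {kk : ℕ → ℕ}

lemma le_iff (hkk : IsDyadicHittingTimes F kk) (hF : Monotone F)
    (hFtop : Tendsto F atTop atTop) {m : ℕ} (hm : 1 ≤ m) (k : ℕ) :
    kk m ≤ k ↔ (2 : ℝ) ^ m ≤ F k := by
  rw [hkk m hm]
  exact Nat.sInf_le_iff_of_monotone hF (hFtop.eventually_ge_atTop _).exists k

lemma two_pow_le (hkk : IsDyadicHittingTimes F kk) (hF : Monotone F)
    (hFtop : Tendsto F atTop atTop) {m : ℕ} (hm : 1 ≤ m) : (2 : ℝ) ^ m ≤ F (kk m) :=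
  (hkk.le_iff hF hFtop hm _).mp le_rfl

lemma lt_two_pow_of_lt (hkk : IsDyadicHittingTimes F kk) (hF : Monotone F)
    (hFtop : Tendsto F atTop atTop) {m k : ℕ} (hm : 1 ≤ m) (hk : k < kk m) :
    F k < 2 ^ m :=
  not_le.mp fun h => hk.not_ge ((hkk.le_iff hF hFtop hm k).mpr h)

lemma tendsto_atTop (hkk : IsDyadicHittingTimes F kk) (hF : Monotone F)
    (hFtop : Tendsto F atTop atTop) : Tendsto kk atTop atTop := by
  refine Filter.tendsto_atTop.2 fun b => ?_
  filter_upwards [(tendsto_pow_atTop_atTop_of_one_lt one_lt_two).eventually_gt_atTop (F b),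
    eventually_ge_atTop 1] with m hFb hm
  by_contra! h
  exact not_le.mpr hFb ((hkk.le_iff hF hFtop hm b).mp h.le)

lemma modulus_ncard_div_le (hkk : IsDyadicHittingTimes F kk) (hf : IsModulus f)
    (hF0 : ∀ k, 0 ≤ F k) (hF : Monotone F) (hFtop : Tendsto F atTop atTop) (C : Set ℕ)
    {m : ℕ} (hm : 1 ≤ m) :
    f ((C ∩ Set.Ico (kk m) (kk (m + 1))).ncard) / F (kk m) ≤
      2 * (f (cnt C (kk (m + 1) - 1 + 1)) / F (kk (m + 1) - 1)) := by
  rcases le_or_gt (kk (m + 1)) (kk m) with hle | hlt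
  · rw [Set.Ico_eq_empty (not_lt.mpr hle), Set.inter_empty, Set.ncard_empty, Nat.cast_zero,
      hf.map_zero, zero_div]
    exact mul_nonneg zero_le_two (div_nonneg (hf.natCast_nonneg _) (hF0 _))
  obtain ⟨k, hk⟩ : ∃ k, kk (m + 1) = k + 1 := ⟨kk (m + 1) - 1, by omega⟩
  rw [hk, Nat.add_sub_cancel]
  have hFm := hkk.two_pow_le hF hFtop hm
  have hFk : F k < 2 ^ (m + 1) := hkk.lt_two_pow_of_lt hF hFtop (by omega) (by omega)
  have hFk_pos : 0 < F k := (pow_pos two_pos m).trans_le (hFm.trans (hF (by omega)))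
  calc f ((C ∩ Set.Ico (kk m) (k + 1)).ncard) / F (kk m)
      ≤ f (cnt C (k + 1)) / (F k / 2) := by
        refine div_le_div₀ (hf.natCast_nonneg _) ?_ (half_pos hFk_pos) ?_
        · exact hf.natCast_mono (ncard_inter_Ico_le_cnt C _ _)
        · rw [pow_succ] at hFk
          linarith
    _ = 2 * (f (cnt C (k + 1)) / F k) := by field_simp

theorem tendsto_modulus_ncard_div (hkk : IsDyadicHittingTimes F kk) (hf : IsModulus f)
    (hF0 : ∀ k, 0 ≤ F k) (hF : Monotone F) (hFtop : Tendsto F atTop atTop) {C : Set ℕ}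
    (hC : Tendsto (fun k => f (cnt C k) / F k) atTop (𝓝 0)) :
    Tendsto (fun m => f ((C ∩ Set.Ico (kk m) (kk (m + 1))).ncard) / F (kk m)) atTop (𝓝 0) := by
  have hlast : Tendsto (fun m => kk (m + 1) - 1) atTop atTop :=
    (tendsto_sub_atTop_nat 1).comp ((hkk.tendsto_atTop hF hFtop).comp (tendsto_add_atTop_nat 1))
  refine squeeze_zero' (Eventually.of_forall fun m => div_nonneg (hf.natCast_nonneg _) (hF0 _))
    ?_ (by simpa using ((tendsto_modulus_cnt_succ_div hf hF0 hFtop hC).comp hlast).const_mul 2)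
  filter_upwards [eventually_ge_atTop 1] with m hm
  exact hkk.modulus_ncard_div_le hf hF0 hF hFtop C hm

lemma modulus_ncard_div_two_pow_le (hkk : IsDyadicHittingTimes F kk) (hf : IsModulus f)
    (hF : Monotone F) (hFtop : Tendsto F atTop atTop) (C : Set ℕ) {j : ℕ} (hj : 1 ≤ j) :
    f ((C ∩ Set.Ico (kk j) (kk (j + 1))).ncard) / 2 ^ j ≤
      2 * (f ((C ∩ Set.Ico (kk j) (kk (j + 1))).ncard) / F (kk j)) := by
  rcases le_or_gt (kk (j + 1)) (kk j) with hle | hlt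
  · simp [Set.Ico_eq_empty (not_lt.mpr hle), hf.map_zero]
  have hFj := hkk.two_pow_le hF hFtop hj
  have hFj' : F (kk j) < 2 ^ (j + 1) := hkk.lt_two_pow_of_lt hF hFtop (by omega) hlt
  have hb := hf.natCast_nonneg (C ∩ Set.Ico (kk j) (kk (j + 1))).ncard
  have hFj_pos : 0 < F (kk j) := (pow_pos two_pos j).trans_le hFj
  calc f ((C ∩ Set.Ico (kk j) (kk (j + 1))).ncard) / 2 ^ j
      = 2 * (f ((C ∩ Set.Ico (kk j) (kk (j + 1))).ncard) / 2 ^ (j + 1)) := by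
        rw [pow_succ]
        field_simp
    _ ≤ 2 * (f ((C ∩ Set.Ico (kk j) (kk (j + 1))).ncard) / F (kk j)) := by gcongr

lemma modulus_cnt_div_le (hkk : IsDyadicHittingTimes F kk) (hf : IsModulus f)
    (hF : Monotone F) (hFtop : Tendsto F atTop atTop) (C : Set ℕ) {k m : ℕ}
    (hlo : (2 : ℝ) ^ m ≤ F k) (hhi : F k < 2 ^ (m + 1)) :
    f (cnt C k) / F k ≤ (f (cnt C (kk 0)) +
      ∑ j ∈ range (m + 1), f ((C ∩ Set.Ico (kk j) (kk (j + 1))).ncard)) / 2 ^ m := by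
  have hk : k < kk (m + 1) :=
    not_le.mp fun h => hhi.not_ge ((hkk.le_iff hF hFtop (by omega) k).mp h)
  have hcnt := (cnt_mono C hk.le).trans (cnt_le_cnt_add_sum_ncard_inter_Ico C kk (m + 1))
  refine div_le_div₀ (add_nonneg (hf.natCast_nonneg _)
    (sum_nonneg fun j _ => hf.natCast_nonneg _)) ?_ (pow_pos two_pos m) hlo
  calc f (cnt C k) ≤ f ↑(cnt C (kk 0) +
        ∑ j ∈ range (m + 1), (C ∩ Set.Ico (kk j) (kk (j + 1))).ncard) := hf.natCast_mono hcnt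
    _ ≤ _ := (hf.natCast_add_le _ _).trans (add_le_add le_rfl (hf.natCast_sum_le _ _))

theorem tendsto_modulus_cnt_div (hkk : IsDyadicHittingTimes F kk) (hf : IsModulus f)
    (hF : Monotone F) (hFtop : Tendsto F atTop atTop) {C : Set ℕ}
    (hC : Tendsto (fun m => f ((C ∩ Set.Ico (kk m) (kk (m + 1))).ncard) / F (kk m))
      atTop (𝓝 0)) :
    Tendsto (fun k => f (cnt C k) / F k) atTop (𝓝 0) := by
  set b : ℕ → ℝ := fun j => f ((C ∩ Set.Ico (kk j) (kk (j + 1))).ncard)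
  have hb : Tendsto (fun j => b j / 2 ^ j) atTop (𝓝 0) := by
    refine squeeze_zero'
      (Eventually.of_forall fun j => div_nonneg (hf.natCast_nonneg _) (by positivity))
      ?_ (by simpa using hC.const_mul 2)
    filter_upwards [eventually_ge_atTop 1] with j hj
    exact hkk.modulus_ncard_div_two_pow_le hf hF hFtop C hj
  have hbound : Tendsto (fun m => (f (cnt C (kk 0)) + ∑ j ∈ range (m + 1), b j) / 2 ^ m)
      atTop (𝓝 0) := by
    have := ((tendsto_const_nhds (x := f (cnt C (kk 0)))).div_atTop
      (tendsto_pow_atTop_atTop_of_one_lt one_lt_two)).add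
      (((tendsto_sum_range_div_two_pow hb).comp (tendsto_add_atTop_nat 1)).const_mul 2)
    rw [show (0 : ℝ) = 0 + 2 * 0 by norm_num]
    refine this.congr fun m => ?_
    simp only [Function.comp_apply, pow_succ]
    field_simp
  -- the dyadic block index of `k` is `m = log₂ ⌊F k⌋`
  refine squeeze_zero' ?_ ?_ (hbound.comp (tendsto_log_floor_atTop.comp hFtop))
  · filter_upwards [hFtop.eventually_gt_atTop 0] with k hk
    exact div_nonneg (hf.natCast_nonneg _) hk.le
  · filter_upwards [hFtop.eventually_ge_atTop 1] with k hk
    exact hkk.modulus_cnt_div_le hf hF hFtop C (two_pow_log_floor_le hk)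
      (lt_two_pow_log_floor_succ _)

end IsDyadicHittingTimes

theorem stmt9_general (f : ℝ → ℝ) (g : ℕ → ℕ) (hf : IsModulus f) (hfu : IsUnboundedMod f)
    (hg : InHup g) (kk : ℕ → ℕ)
    (hkk : ∀ m : ℕ, 1 ≤ m → kk m = sInf {k : ℕ | (2 : ℝ) ^ m ≤ f (g k : ℝ)}) :
    ZgfN f g =
      {C : Set ℕ |
        Tendsto
          (fun m => f (((C ∩ Set.Ico (kk m) (kk (m + 1))).ncard : ℝ)) / f (g (kk m) : ℝ))
          atTop (nhds 0)} := by
  have hkk' : IsDyadicHittingTimes (fun k => f (g k : ℝ)) kk := hkk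
  have hF : Monotone fun k => f (g k : ℝ) := fun a b hab => hf.natCast_mono (hg.1 hab)
  have hFtop : Tendsto (fun k => f (g k : ℝ)) atTop atTop :=
    (hf.tendsto_atTop_atTop hfu).comp (tendsto_natCast_atTop_atTop.comp hg.2.1)
  ext C
  exact ⟨hkk'.tendsto_modulus_ncard_div hf (fun k => hf.natCast_nonneg _) hF hFtop,
    hkk'.tendsto_modulus_cnt_div hf hF hFtop⟩

theorem stmt9 (f : ℝ → ℝ) (g : ℕ → ℕ) (hf : IsModulus f) (hfu : IsUnboundedMod f)
    (hg : InHup g) (kk : ℕ → ℕ) (hkk0 : kk 0 = 0)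
    (hkk : ∀ m : ℕ, 1 ≤ m → kk m = sInf {k : ℕ | (2 : ℝ) ^ m ≤ f (g k : ℝ)}) :
    ZgfN f g =
      {C : Set ℕ |
        Tendsto
          (fun m => f (((C ∩ Set.Ico (kk m) (kk (m + 1))).ncard : ℝ)) / f (g (kk m) : ℝ))
          atTop (nhds 0)} :=
  stmt9_general f g hf hfu hg kk hkk
end

section
/- Let g ∈ H↑ (a nondecreasing ℕ-valued weight function) and let f be an unbounded modulus function, and let {φ_m}_{m∈ℕ} be the associated sequence of submeasures, φ_m(C) = f(|C ∩ [k_m, k_{m+1})|)/f(g(k_m)), where k_0 = 0 and k_m = min{k ∈ ℕ : f(g(k)) ≥ 2^m} for m ≥ 1. Then sup_{m∈ℕ} φ_m(ℕ) < ∞ if and only if the sequence {f(|(f∘g)^{-1}([2^m, 2^{m+1}))|)/2^m}_{m∈ℕ} is bounded, where (f∘g)^{-1}([2^m, 2^{m+1})) = {k ∈ ℕ : 2^m ≤ f(g(k)) < 2^{m+1}}. -/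
open Filter Topology

/-- The submeasure `φ_m` associated with `f`, `g` and the scale sequence `kk`:
`φ_m(C) = f(|C ∩ [k_m, k_{m+1})|) / f(g(k_m))`. -/
noncomputable def phi (f : ℝ → ℝ) (g : ℕ → ℕ) (kk : ℕ → ℕ) (m : ℕ) (C : Set ℕ) : ℝ :=
  f (((C ∩ Set.Ico (kk m) (kk (m + 1))).ncard : ℝ)) / f (g (kk m) : ℝ)

theorem stmt10 (f : ℝ → ℝ) (g : ℕ → ℕ) (hf : IsModulus f) (hfu : IsUnboundedMod f)
    (hg : InHup g) (kk : ℕ → ℕ) (hkk0 : kk 0 = 0)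
    (hkk : ∀ m : ℕ, 1 ≤ m → kk m = sInf {k : ℕ | (2 : ℝ) ^ m ≤ f (g k : ℝ)}) :
    (∃ M : ℝ, ∀ m : ℕ, phi f g kk m Set.univ ≤ M) ↔
      ∃ M : ℝ, ∀ m : ℕ,
        f (({k : ℕ | (2 : ℝ) ^ m ≤ f (g k : ℝ) ∧ f (g k : ℝ) < (2 : ℝ) ^ (m + 1)}.ncard : ℝ))
          / (2 : ℝ) ^ m ≤ M := by
  obtain ⟨hf0, hfmono, -, hfzero, -⟩ := hf
  obtain ⟨hgmono, hgtop, -⟩ := hg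
  have hfz : f 0 = 0 := (hfzero 0 le_rfl).mpr rfl
  -- monotonicity of f ∘ g
  have fgmono : ∀ {a b : ℕ}, a ≤ b → f (g a : ℝ) ≤ f (g b : ℝ) := by
    intro a b hab
    exact hfmono (Set.mem_Ici.mpr (Nat.cast_nonneg _)) (Set.mem_Ici.mpr (Nat.cast_nonneg _))
      (Nat.cast_le.mpr (hgmono hab))
  -- the level sets
  set S : ℕ → Set ℕ := fun m => {k : ℕ | (2 : ℝ) ^ m ≤ f (g k : ℝ)} with hS
  have hSne : ∀ m : ℕ, (S m).Nonempty := by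
    intro m
    obtain ⟨x, hx0, hx⟩ := hfu ((2 : ℝ) ^ m)
    obtain ⟨k, hk⟩ := (hgtop.eventually_ge_atTop ⌈x⌉₊).exists
    refine ⟨k, le_trans (le_of_lt hx) ?_⟩
    exact hfmono (Set.mem_Ici.mpr hx0) (Set.mem_Ici.mpr (Nat.cast_nonneg _))
      (le_trans (Nat.le_ceil x) (Nat.cast_le.mpr hk))
  have hSup : ∀ m : ℕ, ∀ {a b : ℕ}, a ∈ S m → a ≤ b → b ∈ S m := by
    intro m a b ha hab
    exact le_trans ha (fgmono hab)
  have hkkmem : ∀ m : ℕ, 1 ≤ m → kk m ∈ S m := by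
    intro m hm
    rw [hkk m hm]
    exact Nat.sInf_mem (hSne m)
  have hmemiff : ∀ m : ℕ, 1 ≤ m → ∀ k : ℕ, k ∈ S m ↔ kk m ≤ k := by
    intro m hm k
    constructor
    · intro hk; rw [hkk m hm]; exact Nat.sInf_le hk
    · intro hk; exact hSup m (hkkmem m hm) hk
  -- the interval description of the level sets
  have hA : ∀ m : ℕ, 1 ≤ m →
      {k : ℕ | (2 : ℝ) ^ m ≤ f (g k : ℝ) ∧ f (g k : ℝ) < (2 : ℝ) ^ (m + 1)}
        = Set.Ico (kk m) (kk (m + 1)) := by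
    intro m hm
    ext k
    simp only [Set.mem_setOf_eq, Set.mem_Ico]
    rw [← hmemiff m hm k]
    constructor
    · rintro ⟨h1, h2⟩
      refine ⟨h1, ?_⟩
      by_contra hcon
      push_neg at hcon
      exact absurd ((hmemiff (m + 1) (by omega) k).mpr hcon) (not_le.mpr h2)
    · rintro ⟨h1, h2⟩
      refine ⟨h1, ?_⟩
      by_contra hcon
      push_neg at hcon
      exact absurd ((hmemiff (m + 1) (by omega) k).mp hcon) (not_le.mpr h2)
  have hIcoCard : ∀ a b : ℕ, (Set.Ico a b).ncard = b - a := by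
    intro a b
    rw [← Finset.coe_Ico, Set.ncard_coe_finset, Nat.card_Ico]
  have hkkmono : ∀ m : ℕ, 1 ≤ m → kk m ≤ kk (m + 1) := by
    intro m hm
    rw [hkk m hm]
    refine Nat.sInf_le ?_
    show (2 : ℝ) ^ m ≤ f (g (kk (m + 1)) : ℝ)
    exact le_trans (pow_le_pow_right₀ (by norm_num) (by omega)) (hkkmem (m + 1) (by omega))
  -- value of phi on univ
  have hphi : ∀ m : ℕ, phi f g kk m Set.univ
      = f ((kk (m + 1) - kk m : ℕ) : ℝ) / f (g (kk m) : ℝ) := by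
    intro m
    rw [phi, Set.univ_inter, hIcoCard]
  have hphinn : ∀ m : ℕ, 0 ≤ phi f g kk m Set.univ := by
    intro m
    rw [hphi]
    exact div_nonneg (hf0 _ (Nat.cast_nonneg _)) (hf0 _ (Nat.cast_nonneg _))
  -- the target sequence
  set t : ℕ → ℝ := fun m =>
    f (({k : ℕ | (2 : ℝ) ^ m ≤ f (g k : ℝ) ∧ f (g k : ℝ) < (2 : ℝ) ^ (m + 1)}.ncard : ℝ))
      / (2 : ℝ) ^ m with ht
  have htnn : ∀ m : ℕ, 0 ≤ t m := fun m =>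
    div_nonneg (hf0 _ (Nat.cast_nonneg _)) (by positivity)
  -- key comparison for m ≥ 1
  have hkey : ∀ m : ℕ, 1 ≤ m →
      phi f g kk m Set.univ ≤ t m ∧ t m ≤ 2 * phi f g kk m Set.univ := by
    intro m hm
    have htm : t m = f ((kk (m + 1) - kk m : ℕ) : ℝ) / (2 : ℝ) ^ m := by
      rw [ht]
      simp only [hA m hm, hIcoCard]
    have hD1 : (2 : ℝ) ^ m ≤ f (g (kk m) : ℝ) := hkkmem m hm
    by_cases hlt : kk m < kk (m + 1)
    · -- nonempty interval: kk m ∉ S (m+1)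
      have hD2 : f (g (kk m) : ℝ) < (2 : ℝ) ^ (m + 1) := by
        by_contra hcon
        push_neg at hcon
        have := (hmemiff (m + 1) (by omega) (kk m)).mp hcon
        omega
      have hfn : 0 ≤ f ((kk (m + 1) - kk m : ℕ) : ℝ) := hf0 _ (Nat.cast_nonneg _)
      constructor
      · rw [hphi, htm]
        exact div_le_div_of_nonneg_left hfn (by positivity) hD1
      · rw [hphi, htm]
        have h2 : f ((kk (m + 1) - kk m : ℕ) : ℝ) / (2 : ℝ) ^ m
            = 2 * (f ((kk (m + 1) - kk m : ℕ) : ℝ) / (2 : ℝ) ^ (m + 1)) := by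
          rw [pow_succ]
          field_simp
        rw [h2]
        have h3 : f ((kk (m + 1) - kk m : ℕ) : ℝ) / (2 : ℝ) ^ (m + 1)
            ≤ f ((kk (m + 1) - kk m : ℕ) : ℝ) / f (g (kk m) : ℝ) :=
          div_le_div_of_nonneg_left hfn (lt_of_lt_of_le (by positivity) hD1) (le_of_lt hD2)
        linarith
    · -- empty interval: everything is 0
      have heq : kk (m + 1) = kk m := le_antisymm (not_lt.mp hlt) (hkkmono m hm)
      have hz : ((kk (m + 1) - kk m : ℕ) : ℝ) = 0 := by
        rw [heq]; simp
      rw [hphi, htm, hz, hfz]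
      constructor
      · simp
      · simp
  constructor
  · rintro ⟨M, hM⟩
    refine ⟨max (2 * M) (t 0), ?_⟩
    intro m
    rcases Nat.eq_zero_or_pos m with hm | hm
    · subst hm
      exact le_max_right _ _
    · refine le_trans ((hkey m hm).2) (le_trans ?_ (le_max_left _ _))
      have := hM m
      linarith
  · rintro ⟨M, hM⟩
    refine ⟨max M (phi f g kk 0 Set.univ), ?_⟩
    intro m
    rcases Nat.eq_zero_or_pos m with hm | hm
    · subst hm
      exact le_max_right _ _
    · exact le_trans ((hkey m hm).1) (le_trans (hM m) (le_max_left _ _))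
end

section
/- Let g ∈ H↑ (a nondecreasing ℕ-valued weight function) and let f be an unbounded modulus function, and let {φ_m}_{m∈ℕ} be the associated sequence of submeasures, φ_m(C) = f(|C ∩ [k_m, k_{m+1})|)/f(g(k_m)), where k_0 = 0 and k_m = min{k ∈ ℕ : f(g(k)) ≥ 2^m} for m ≥ 1. Suppose that for every M > 0 there exists L > 0 such that f(g(k + ⌊L·f(g(k))⌋))/f(g(k)) > M for all but finitely many k ∈ ℕ. Then sup_{m∈ℕ} φ_m(ℕ) < ∞. -/
open Filter Topology

theorem stmt11 (f : ℝ → ℝ) (g : ℕ → ℕ) (hf : IsModulus f) (hfu : IsUnboundedMod f)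
    (hg : InHup g) (kk : ℕ → ℕ) (hkk0 : kk 0 = 0)
    (hkk : ∀ m : ℕ, 1 ≤ m → kk m = sInf {k : ℕ | (2 : ℝ) ^ m ≤ f (g k : ℝ)})
    (hcond : ∀ M : ℝ, 0 < M → ∃ L : ℝ, 0 < L ∧
      ∀ᶠ k : ℕ in atTop, M < f (g (k + ⌊L * f (g k : ℝ)⌋₊) : ℝ) / f (g k : ℝ)) :
    ∃ M : ℝ, ∀ m : ℕ, phi f g kk m Set.univ ≤ M := by
  obtain ⟨hf0, hfmono, hfsub, hfzero, -⟩ := hf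
  have hf00 : f 0 = 0 := (hfzero 0 le_rfl).mpr rfl
  have hf1 : 0 < f 1 := by
    rcases lt_or_eq_of_le (hf0 1 one_pos.le) with h | h
    · exact h
    · exact absurd ((hfzero 1 one_pos.le).mp h.symm) one_ne_zero
  have fnat : ∀ n : ℕ, f n ≤ n * f 1 := by
    intro n; induction n with
    | zero => simp [hf00]
    | succ n ih =>
      have h := hfsub n 1 (by positivity) (by norm_num)
      push_cast
      nlinarith
  have fle : ∀ t : ℝ, 0 ≤ t → f t ≤ (t + 1) * f 1 := by
    intro t ht
    calc f t ≤ f (⌈t⌉₊ : ℝ) :=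
          hfmono (Set.mem_Ici.mpr ht) (Set.mem_Ici.mpr (by positivity)) (Nat.le_ceil t)
      _ ≤ (⌈t⌉₊ : ℝ) * f 1 := fnat _
      _ ≤ (t + 1) * f 1 := by
          have := (Nat.ceil_lt_add_one ht).le
          nlinarith
  have hfg : ∀ M : ℝ, ∃ K : ℕ, ∀ k ≥ K, M < f (g k : ℝ) := by
    intro M
    obtain ⟨x, hx, hxf⟩ := hfu M
    obtain ⟨K, hK⟩ := Filter.eventually_atTop.mp (hg.2.1.eventually_ge_atTop ⌈x⌉₊)
    refine ⟨K, fun k hk => lt_of_lt_of_le hxf ?_⟩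
    refine hfmono (Set.mem_Ici.mpr hx) (Set.mem_Ici.mpr (by positivity)) ?_
    calc x ≤ (⌈x⌉₊ : ℝ) := Nat.le_ceil x
      _ ≤ (g k : ℝ) := by exact_mod_cast hK k hk
  obtain ⟨L, hL, hev⟩ := hcond 2 two_pos
  obtain ⟨K, hK⟩ := Filter.eventually_atTop.mp hev
  obtain ⟨m₀', hm₀⟩ := Filter.eventually_atTop.mp
    ((tendsto_pow_atTop_atTop_of_one_lt (by norm_num : (1:ℝ) < 2)).eventually_gt_atTop (f (g K)))
  set m₀ : ℕ := max m₀' 1 with hm₀def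
  refine ⟨max ((Finset.range (m₀ + 1)).sup' (by simp) (fun m => phi f g kk m Set.univ))
      (L * f 1 + f 1), fun m => ?_⟩
  rcases le_or_gt m m₀ with hm | hm
  · refine le_max_of_le_left ?_
    exact Finset.le_sup' (fun m => phi f g kk m Set.univ)
      (Finset.mem_range.mpr (Nat.lt_succ_of_le hm))
  refine le_max_of_le_right ?_
  have hm1 : 1 ≤ m := le_trans (le_max_right _ _) hm.le
  have hmm0 : m₀' ≤ m := le_trans (le_max_left _ _) hm.le
  have hne : {k : ℕ | (2:ℝ) ^ m ≤ f (g k : ℝ)}.Nonempty := by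
    obtain ⟨K', hK'⟩ := hfg ((2:ℝ) ^ m)
    exact ⟨K', (hK' K' le_rfl).le⟩
  have hkm : (2:ℝ) ^ m ≤ f (g (kk m) : ℝ) := by
    rw [hkk m hm1]; exact Nat.sInf_mem hne
  have hF : 0 < f (g (kk m) : ℝ) := lt_of_lt_of_le (by positivity) hkm
  have hKle : K ≤ kk m := by
    by_contra h
    push_neg at h
    have h1 : f (g (kk m) : ℝ) ≤ f (g K : ℝ) :=
      hfmono (Set.mem_Ici.mpr (by positivity)) (Set.mem_Ici.mpr (by positivity))
        (by exact_mod_cast hg.1 h.le)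
    have h2 := hm₀ m hmm0
    linarith
  set d : ℕ := ⌊L * f (g (kk m) : ℝ)⌋₊ with hd
  have h2 := hK (kk m) hKle
  have h3 : 2 * f (g (kk m) : ℝ) < f (g (kk m + d) : ℝ) := by
    rw [lt_div_iff₀ hF] at h2
    linarith
  have h4 : kk (m + 1) ≤ kk m + d := by
    rw [hkk (m + 1) (by omega)]
    apply Nat.sInf_le
    show (2:ℝ) ^ (m + 1) ≤ f (g (kk m + d) : ℝ)
    rw [pow_succ]
    nlinarith
  have ht : ((kk (m+1) - kk m : ℕ) : ℝ) ≤ L * f (g (kk m) : ℝ) := by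
    calc ((kk (m+1) - kk m : ℕ) : ℝ) ≤ (d : ℝ) := by exact_mod_cast Nat.sub_le_iff_le_add'.mpr h4
      _ ≤ L * f (g (kk m) : ℝ) := Nat.floor_le (by positivity)
  have hcard : (Set.univ ∩ Set.Ico (kk m) (kk (m+1))).ncard = kk (m+1) - kk m := by
    rw [Set.univ_inter, ← Finset.coe_Ico, Set.ncard_coe_finset, Nat.card_Ico]
  have hFone : (1:ℝ) ≤ f (g (kk m) : ℝ) :=
    le_trans (one_le_pow₀ (by norm_num : (1:ℝ) ≤ 2)) hkm
  rw [phi, hcard, div_le_iff₀ hF]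
  have h5 := fle ((kk (m+1) - kk m : ℕ) : ℝ) (by positivity)
  nlinarith [hf1.le, hL.le]
end

section
/- Let g ∈ H↑ (a nondecreasing ℕ-valued weight function) and let f be an unbounded modulus function, and let {φ_m}_{m∈ℕ} be the associated sequence of submeasures, φ_m(C) = f(|C ∩ [k_m, k_{m+1})|)/f(g(k_m)), where k_0 = 0 and k_m = min{k ∈ ℕ : f(g(k)) ≥ 2^m} for m ≥ 1. Then sup_{m∈ℕ} φ_m(ℕ) < ∞ if and only if the sequence {f(k)/f(g(k))}_{k∈ℕ} is bounded. -/
open Filter Topology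

theorem stmt12 (f : ℝ → ℝ) (g : ℕ → ℕ) (hf : IsModulus f) (hfu : IsUnboundedMod f)
    (hg : InHup g) (kk : ℕ → ℕ) (hkk0 : kk 0 = 0)
    (hkk : ∀ m : ℕ, 1 ≤ m → kk m = sInf {k : ℕ | (2 : ℝ) ^ m ≤ f (g k : ℝ)}) :
    (∃ M : ℝ, ∀ m : ℕ, phi f g kk m Set.univ ≤ M) ↔
      ∃ M : ℝ, ∀ k : ℕ, f (k : ℝ) / f (g k : ℝ) ≤ M := by
  obtain ⟨hfnn, hfmono, hfsub, hfzero, -⟩ := hf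
  obtain ⟨hgmono, hgtop, -⟩ := hg
  have hf0 : f 0 = 0 := (hfzero 0 le_rfl).mpr rfl
  have hmN : ∀ a b : ℕ, a ≤ b → f (a : ℝ) ≤ f (b : ℝ) := fun a b h =>
    hfmono (Set.mem_Ici.2 (Nat.cast_nonneg a)) (Set.mem_Ici.2 (Nat.cast_nonneg b))
      (Nat.cast_le.2 h)
  -- S m is nonempty
  have hSne : ∀ m : ℕ, {k : ℕ | (2 : ℝ) ^ m ≤ f (g k : ℝ)}.Nonempty := by
    intro m
    obtain ⟨x, hx0, hx⟩ := hfu ((2 : ℝ) ^ m)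
    obtain ⟨k, hk⟩ := (hgtop.eventually_ge_atTop ⌈x⌉₊).exists
    refine ⟨k, ?_⟩
    have hxg : x ≤ (g k : ℝ) := le_trans (Nat.le_ceil x) (Nat.cast_le.2 hk)
    exact le_trans hx.le (hfmono (Set.mem_Ici.2 hx0)
      (Set.mem_Ici.2 (Nat.cast_nonneg _)) hxg)
  have hAm : ∀ m : ℕ, 1 ≤ m → (2 : ℝ) ^ m ≤ f (g (kk m) : ℝ) := by
    intro m hm
    have := Nat.sInf_mem (hSne m)
    rw [← hkk m hm] at this
    exact this
  have hBm : ∀ m : ℕ, 1 ≤ m → ∀ k : ℕ, k < kk m → f (g k : ℝ) < (2 : ℝ) ^ m := by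
    intro m hm k hk
    rw [hkk m hm] at hk
    have := Nat.notMem_of_lt_sInf hk
    exact lt_of_not_ge this
  have hkkmono : ∀ m : ℕ, kk m ≤ kk (m + 1) := by
    intro m
    cases m with
    | zero => rw [hkk0]; exact Nat.zero_le _
    | succ n =>
      rw [hkk (n + 1) (by omega)]
      apply Nat.sInf_le
      have h1 : (2 : ℝ) ^ (n + 1) ≤ (2 : ℝ) ^ (n + 2) :=
        pow_le_pow_right₀ one_le_two (by omega)
      exact le_trans h1 (hAm (n + 2) (by omega))
  have hphiu : ∀ m : ℕ, phi f g kk m Set.univ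
      = f ((kk (m + 1) - kk m : ℕ) : ℝ) / f (g (kk m) : ℝ) := by
    intro m
    unfold phi
    rw [Set.univ_inter, ← Finset.coe_Ico, Set.ncard_coe_finset, Nat.card_Ico]
  constructor
  · -- forward direction
    rintro ⟨M, hM⟩
    set M' : ℝ := max M 0 with hM'def
    have hM'0 : (0 : ℝ) ≤ M' := le_max_right _ _
    have hM' : ∀ m, phi f g kk m Set.univ ≤ M' := fun m =>
      le_trans (hM m) (le_max_left _ _)
    -- numerator bound
    have hnum2 : ∀ m : ℕ, 1 ≤ m →
        f ((kk (m + 1) - kk m : ℕ) : ℝ) ≤ M' * 2 ^ (m + 1) := by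
      intro m hm
      rcases eq_or_lt_of_le (hkkmono m) with he | hlt
      · rw [← he, Nat.sub_self]
        simp only [Nat.cast_zero, hf0]
        positivity
      · have hden : (0 : ℝ) < f (g (kk m) : ℝ) :=
          lt_of_lt_of_le (by positivity) (hAm m hm)
        have h1 := hM' m
        rw [hphiu m, div_le_iff₀ hden] at h1
        have h2 : f (g (kk m) : ℝ) < 2 ^ (m + 1) := hBm (m + 1) (by omega) (kk m) hlt
        calc f ((kk (m + 1) - kk m : ℕ) : ℝ) ≤ M' * f (g (kk m) : ℝ) := h1
          _ ≤ M' * 2 ^ (m + 1) := mul_le_mul_of_nonneg_left h2.le hM'0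
    -- bound on f(kk m)
    have hfkk : ∀ m : ℕ, 1 ≤ m → f ((kk m : ℕ) : ℝ) ≤ f ((kk 1 : ℕ) : ℝ) + M' * 2 ^ (m + 1) := by
      intro m hm
      induction m with
      | zero => omega
      | succ n ih =>
        rcases Nat.lt_or_ge n 1 with hn | hn
        · interval_cases n
          have h5 : (0:ℝ) ≤ M' * 2 ^ (0 + 1 + 1) := by positivity
          norm_num at h5 ⊢
          linarith
        · have ihn := ih hn
          have hcast : ((kk (n + 1) : ℕ) : ℝ)
              = ((kk n : ℕ) : ℝ) + ((kk (n + 1) - kk n : ℕ) : ℝ) := by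
            rw [Nat.cast_sub (hkkmono n)]; ring
          have h1 : f ((kk (n + 1) : ℕ) : ℝ)
              ≤ f ((kk n : ℕ) : ℝ) + f ((kk (n + 1) - kk n : ℕ) : ℝ) := by
            rw [hcast]
            exact hfsub _ _ (Nat.cast_nonneg _) (Nat.cast_nonneg _)
          have h2 := hnum2 n hn
          have h3 : M' * 2 ^ (n + 1) + M' * 2 ^ (n + 1) = M' * 2 ^ (n + 2) := by ring
          linarith
    obtain ⟨B, hBk⟩ := Finset.exists_le ((Finset.range (kk 1)).image fun k : ℕ => f (k : ℝ) / f (g k : ℝ))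
    refine ⟨max B (f ((kk 1 : ℕ) : ℝ) / 2 + 4 * M'), fun k => ?_⟩
    by_cases hk : k < kk 1
    · exact le_trans (hBk _ (Finset.mem_image.2 ⟨k, Finset.mem_range.2 hk, rfl⟩))
        (le_max_left _ _)
    · push_neg at hk
      have hex : ∃ m, k < kk m := by
        obtain ⟨m₁, hm₁⟩ := pow_unbounded_of_one_lt (f (g k : ℝ)) (one_lt_two (α := ℝ))
        refine ⟨max m₁ 1, ?_⟩
        by_contra h
        push_neg at h
        have h1 : f (g (kk (max m₁ 1)) : ℝ) ≤ f (g k : ℝ) := hmN _ _ (hgmono h)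
        have h2 : (2 : ℝ) ^ m₁ ≤ (2 : ℝ) ^ max m₁ 1 :=
          pow_le_pow_right₀ one_le_two (le_max_left _ _)
        have h3 := hAm (max m₁ 1) (le_max_right _ _)
        linarith
      set N := Nat.find hex with hNdef
      have hN : k < kk N := Nat.find_spec hex
      have hN0 : N ≠ 0 := by
        intro h; rw [h, hkk0] at hN; omega
      have hN1 : N ≠ 1 := by
        intro h; rw [h] at hN; omega
      set m := N - 1 with hmdef
      have hm1 : 1 ≤ m := by omega
      have hNm : N = m + 1 := by omega
      have hkm : kk m ≤ k := by
        by_contra h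
        push_neg at h
        exact Nat.find_min hex (by omega) h
      have hklt : k < kk (m + 1) := by rw [← hNm]; exact hN
      have hden : (2 : ℝ) ^ m ≤ f (g k : ℝ) :=
        le_trans (hAm m hm1) (hmN _ _ (hgmono hkm))
      have hdenpos : (0 : ℝ) < f (g k : ℝ) := lt_of_lt_of_le (by positivity) hden
      have hfk : f (k : ℝ) ≤ f ((kk 1 : ℕ) : ℝ) + M' * 2 ^ (m + 1) + M' * 2 ^ (m + 1) := by
        have hcast : (k : ℝ) = ((kk m : ℕ) : ℝ) + ((k - kk m : ℕ) : ℝ) := by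
          rw [Nat.cast_sub hkm]; ring
        have h1 : f (k : ℝ) ≤ f ((kk m : ℕ) : ℝ) + f ((k - kk m : ℕ) : ℝ) := by
          rw [hcast]
          exact hfsub _ _ (Nat.cast_nonneg _) (Nat.cast_nonneg _)
        have h2 : f ((k - kk m : ℕ) : ℝ) ≤ f ((kk (m + 1) - kk m : ℕ) : ℝ) :=
          hmN _ _ (by omega)
        have h3 := hnum2 m hm1
        have h4 := hfkk m hm1
        linarith
      have hbnn : (0 : ℝ) ≤ f ((kk 1 : ℕ) : ℝ) + M' * 2 ^ (m + 1) + M' * 2 ^ (m + 1) := by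
        have := hfnn ((kk 1 : ℕ) : ℝ) (Nat.cast_nonneg _)
        have h5 : (0:ℝ) ≤ M' * 2 ^ (m + 1) := by positivity
        linarith
      have hq : f (k : ℝ) / f (g k : ℝ)
          ≤ (f ((kk 1 : ℕ) : ℝ) + M' * 2 ^ (m + 1) + M' * 2 ^ (m + 1)) / 2 ^ m :=
        div_le_div₀ hbnn hfk (by positivity) hden
      have heq : (f ((kk 1 : ℕ) : ℝ) + M' * 2 ^ (m + 1) + M' * 2 ^ (m + 1)) / 2 ^ m
          = f ((kk 1 : ℕ) : ℝ) / 2 ^ m + 4 * M' := by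
        field_simp
        ring
      have h2m : (2 : ℝ) ≤ 2 ^ m := by
        calc (2 : ℝ) = 2 ^ 1 := (pow_one 2).symm
          _ ≤ 2 ^ m := pow_le_pow_right₀ one_le_two hm1
      have hdd : f ((kk 1 : ℕ) : ℝ) / 2 ^ m ≤ f ((kk 1 : ℕ) : ℝ) / 2 :=
        div_le_div_of_nonneg_left (hfnn _ (Nat.cast_nonneg _)) two_pos h2m
      refine le_trans hq (le_trans ?_ (le_max_right _ _))
      rw [heq]
      linarith
  · -- backward direction
    rintro ⟨M, hM⟩
    set M' : ℝ := max M 0 with hM'def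
    have hM'0 : (0 : ℝ) ≤ M' := le_max_right _ _
    have hM' : ∀ k : ℕ, f (k : ℝ) / f (g k : ℝ) ≤ M' := fun k =>
      le_trans (hM k) (le_max_left _ _)
    have hf1 : (0 : ℝ) ≤ f 1 := hfnn 1 one_pos.le
    obtain ⟨n₀, hgn⟩ := Filter.eventually_atTop.1 (hgtop.eventually_ge_atTop 1)
    obtain ⟨m₁, hm₁⟩ := pow_unbounded_of_one_lt (f (g n₀ : ℝ)) (one_lt_two (α := ℝ))
    set m₂ := max m₁ 1 with hm₂def
    have hkkbig : ∀ m : ℕ, m₂ ≤ m → n₀ < kk m := by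
      intro m hm
      by_contra h
      push_neg at h
      have h1 : f (g (kk m) : ℝ) ≤ f (g n₀ : ℝ) := hmN _ _ (hgmono h)
      have h2 : (2 : ℝ) ^ m₁ ≤ (2 : ℝ) ^ m :=
        pow_le_pow_right₀ one_le_two (le_trans (le_max_left _ _) hm)
      have h3 := hAm m (le_trans (le_max_right _ _) hm)
      linarith
    obtain ⟨B, hB⟩ := Finset.exists_le ((Finset.range m₂).image fun m => phi f g kk m Set.univ)
    refine ⟨max B (2 * M' + f 1), fun m => ?_⟩
    by_cases hm : m < m₂
    · exact le_trans (hB _ (Finset.mem_image.2 ⟨m, Finset.mem_range.2 hm, rfl⟩))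
        (le_max_left _ _)
    · push_neg at hm
      have hm1 : 1 ≤ m := le_trans (le_max_right _ _) hm
      have hbig : n₀ < kk (m + 1) := hkkbig (m + 1) (by omega)
      set n := kk (m + 1) - 1 with hndef
      have hkkn : kk (m + 1) = n + 1 := by omega
      have hn₀ : n₀ ≤ n := by omega
      have hgn1 : 1 ≤ g n := hgn n hn₀
      have hfgn_pos : (0 : ℝ) < f (g n : ℝ) := by
        rcases lt_or_eq_of_le (hfnn (g n : ℝ) (Nat.cast_nonneg _)) with h | h
        · exact h
        · exfalso
          have := (hfzero (g n : ℝ) (Nat.cast_nonneg _)).mp h.symm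
          have : g n = 0 := Nat.cast_eq_zero.mp this
          omega
      have hfn : f (n : ℝ) ≤ M' * f (g n : ℝ) := by
        have := hM' n
        rwa [div_le_iff₀ hfgn_pos] at this
      have hfgn_lt : f (g n : ℝ) < 2 ^ (m + 1) :=
        hBm (m + 1) (by omega) n (by omega)
      have hden : (2 : ℝ) ^ m ≤ f (g (kk m) : ℝ) := hAm m hm1
      have hdenpos : (0 : ℝ) < f (g (kk m) : ℝ) := lt_of_lt_of_le (by positivity) hden
      have hnumb : f ((kk (m + 1) - kk m : ℕ) : ℝ) ≤ M' * 2 ^ (m + 1) + f 1 := by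
        have h1 : f ((kk (m + 1) - kk m : ℕ) : ℝ) ≤ f ((kk (m + 1) : ℕ) : ℝ) :=
          hmN _ _ (by omega)
        have hcast : ((kk (m + 1) : ℕ) : ℝ) = (n : ℝ) + 1 := by
          rw [hkkn]; push_cast; ring
        have h2 : f ((kk (m + 1) : ℕ) : ℝ) ≤ f (n : ℝ) + f 1 := by
          rw [hcast]
          exact hfsub _ _ (Nat.cast_nonneg _) zero_le_one
        have h3 : M' * f (g n : ℝ) ≤ M' * 2 ^ (m + 1) :=
          mul_le_mul_of_nonneg_left hfgn_lt.le hM'0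
        linarith
      have hnnn : (0 : ℝ) ≤ M' * 2 ^ (m + 1) + f 1 := by positivity
      have hq : phi f g kk m Set.univ ≤ (M' * 2 ^ (m + 1) + f 1) / 2 ^ m := by
        rw [hphiu m]
        exact div_le_div₀ hnnn hnumb (by positivity) hden
      have heq : (M' * 2 ^ (m + 1) + f 1) / 2 ^ m = 2 * M' + f 1 / 2 ^ m := by
        field_simp
        ring
      have h1m : (1 : ℝ) ≤ 2 ^ m := by
        calc (1 : ℝ) = 2 ^ 0 := (pow_zero 2).symm
          _ ≤ 2 ^ m := pow_le_pow_right₀ one_le_two (Nat.zero_le m)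
      have hdd : f 1 / 2 ^ m ≤ f 1 := div_le_self hf1 h1m
      refine le_trans hq (le_trans ?_ (le_max_right _ _))
      rw [heq]
      linarith
end

section
/- Let g ∈ H↑ (a nondecreasing ℕ-valued weight function) and let f be an unbounded modulus function, and let {φ_m}_{m∈ℕ} be the associated sequence of submeasures, φ_m(C) = f(|C ∩ [k_m, k_{m+1})|)/f(g(k_m)), where k_0 = 0 and k_m = min{k ∈ ℕ : f(g(k)) ≥ 2^m} for m ≥ 1. If the sequence {k/g(k)}_{k∈ℕ} is bounded, then sup_{m∈ℕ} φ_m(ℕ) < ∞. -/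
open Filter Topology

theorem stmt13 (f : ℝ → ℝ) (g : ℕ → ℕ) (hf : IsModulus f) (hfu : IsUnboundedMod f)
    (hg : InHup g) (kk : ℕ → ℕ) (hkk0 : kk 0 = 0)
    (hkk : ∀ m : ℕ, 1 ≤ m → kk m = sInf {k : ℕ | (2 : ℝ) ^ m ≤ f (g k : ℝ)})
    (hbd : ∃ M : ℝ, ∀ k : ℕ, (k : ℝ) / (g k : ℝ) ≤ M) :
    ∃ M : ℝ, ∀ m : ℕ, phi f g kk m Set.univ ≤ M := by
  obtain ⟨hnn, hmono, hsub, hzero, _⟩ := hf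
  obtain ⟨hgmono, hgtop, _⟩ := hg
  obtain ⟨M, hM⟩ := hbd
  have hf0 : f 0 = 0 := (hzero 0 le_rfl).mpr rfl
  have hmul : ∀ (n : ℕ) (x : ℝ), 0 ≤ x → f (n * x) ≤ n * f x := by
    intro n
    induction n with
    | zero => intro x hx; simp [hf0]
    | succ n ih =>
      intro x hx
      have h1 : ((n:ℝ)+1) * x = n * x + x := by ring
      push_cast
      rw [h1]
      calc f ((n:ℝ)*x + x) ≤ f ((n:ℝ)*x) + f x := hsub _ _ (by positivity) hx
        _ ≤ (n:ℝ) * f x + f x := by linarith [ih x hx]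
        _ = ((n:ℝ)+1) * f x := by ring
  have hne : ∀ m : ℕ, {k : ℕ | (2:ℝ)^m ≤ f (g k : ℝ)}.Nonempty := by
    intro m
    obtain ⟨x, hx0, hx⟩ := hfu ((2:ℝ)^m)
    obtain ⟨k, hk⟩ := (hgtop.eventually_ge_atTop ⌈x⌉₊).exists
    refine ⟨k, ?_⟩
    have hx' : x ≤ (g k : ℝ) := le_trans (Nat.le_ceil x) (by exact_mod_cast hk)
    exact le_trans hx.le (hmono hx0 (le_trans hx0 hx') hx')
  have hmem : ∀ m : ℕ, 1 ≤ m → (2:ℝ)^m ≤ f (g (kk m) : ℝ) := by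
    intro m hm
    rw [hkk m hm]
    exact Nat.sInf_mem (hne m)
  have hlt : ∀ m : ℕ, 1 ≤ m → ∀ j, j < kk m → f (g j : ℝ) < (2:ℝ)^m := by
    intro m hm j hj
    rw [hkk m hm] at hj
    have h2 := Nat.notMem_of_lt_sInf hj
    simp only [Set.mem_setOf_eq, not_le] at h2
    exact h2
  obtain ⟨k₀, hk₀⟩ : ∃ k₀, ∀ k, k₀ ≤ k → 1 ≤ g k := by
    have h3 := hgtop.eventually_ge_atTop 1
    rw [eventually_atTop] at h3
    exact h3
  set n : ℕ := ⌈max M 0⌉₊ with hn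
  have hMn : M ≤ (n:ℝ) := le_trans (le_max_left _ _) (Nat.le_ceil _)
  set A : ℝ := phi f g kk 0 Set.univ with hA
  set B : ℝ := f (k₀ : ℝ) with hB
  set Cc : ℝ := 2*(n:ℝ) + f 1 with hCc
  have hB0 : 0 ≤ B := hnn _ (by positivity)
  have hf1 : 0 ≤ f 1 := hnn 1 (by norm_num)
  refine ⟨max A (max B Cc), ?_⟩
  intro m
  rcases Nat.eq_zero_or_pos m with hm | hm
  · subst hm; exact le_max_left _ _
  -- m ≥ 1
  have hD : (2:ℝ)^m ≤ f (g (kk m) : ℝ) := hmem m hm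
  have h2m : (1:ℝ) ≤ (2:ℝ)^m := one_le_pow₀ (by norm_num)
  have hD1 : (1:ℝ) ≤ f (g (kk m) : ℝ) := le_trans h2m hD
  have hDpos : (0:ℝ) < f (g (kk m) : ℝ) := lt_of_lt_of_le one_pos hD1
  have hNle : (Set.univ ∩ Set.Ico (kk m) (kk (m+1))).ncard ≤ kk (m+1) := by
    rw [Set.univ_inter]
    have : (Set.Ico (kk m) (kk (m+1))).ncard = (Finset.Ico (kk m) (kk (m+1))).card := by
      rw [← Set.ncard_coe_finset]; simp
    rw [this, Nat.card_Ico]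
    omega
  set N : ℕ := (Set.univ ∩ Set.Ico (kk m) (kk (m+1))).ncard with hNdef
  have hNnn : (0:ℝ) ≤ (N:ℝ) := Nat.cast_nonneg _
  have hfN0 : 0 ≤ f (N:ℝ) := hnn _ hNnn
  have hphi : phi f g kk m Set.univ = f (N:ℝ) / f (g (kk m) : ℝ) := rfl
  rcases Nat.eq_zero_or_pos (kk (m+1)) with hk1 | hk1
  · have hN0 : N = 0 := by omega
    rw [hphi, hN0]
    simp only [Nat.cast_zero, hf0, zero_div]
    exact le_trans hB0 (le_trans (le_max_left _ _) (le_max_right _ _))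
  obtain ⟨j, hj⟩ : ∃ j, kk (m+1) = j + 1 := ⟨kk (m+1) - 1, by omega⟩
  have hfgj : f (g j : ℝ) < (2:ℝ)^(m+1) := hlt (m+1) (by omega) j (by omega)
  rcases lt_or_ge j k₀ with hjk | hjk
  · -- small case
    have hNk : (N:ℝ) ≤ (k₀:ℝ) := by exact_mod_cast (by omega : N ≤ k₀)
    have hfNB : f (N:ℝ) ≤ B := hmono hNnn (Set.mem_Ici.mpr (by positivity)) hNk
    rw [hphi]
    calc f (N:ℝ) / f (g (kk m) : ℝ) ≤ f (N:ℝ) := div_le_self hfN0 hD1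
      _ ≤ B := hfNB
      _ ≤ max A (max B Cc) := le_trans (le_max_left _ _) (le_max_right _ _)
  · -- main case
    have hgj1 : 1 ≤ g j := hk₀ j hjk
    have hgjpos : (0:ℝ) < (g j : ℝ) := by exact_mod_cast hgj1
    have hjle : (j:ℝ) ≤ M * (g j : ℝ) := by
      have := hM j
      rwa [div_le_iff₀ hgjpos] at this
    have hNcast : (N:ℝ) ≤ (n:ℝ) * (g j : ℝ) + 1 := by
      have h4 : (N:ℝ) ≤ (j:ℝ) + 1 := by exact_mod_cast (by omega : N ≤ j + 1)
      have h5 : M * (g j : ℝ) ≤ (n:ℝ) * (g j : ℝ) :=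
        mul_le_mul_of_nonneg_right hMn (le_of_lt hgjpos)
      linarith
    have hfN : f (N:ℝ) ≤ (n:ℝ) * (2:ℝ)^(m+1) + f 1 := by
      calc f (N:ℝ) ≤ f ((n:ℝ) * (g j : ℝ) + 1) :=
            hmono hNnn (Set.mem_Ici.mpr (by positivity)) hNcast
        _ ≤ f ((n:ℝ) * (g j : ℝ)) + f 1 := hsub _ _ (by positivity) (by norm_num)
        _ ≤ (n:ℝ) * f (g j : ℝ) + f 1 := by linarith [hmul n (g j : ℝ) (le_of_lt hgjpos)]
        _ ≤ (n:ℝ) * (2:ℝ)^(m+1) + f 1 := by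
            have := mul_le_mul_of_nonneg_left hfgj.le (Nat.cast_nonneg n)
            linarith
    rw [hphi]
    have hkey : f (N:ℝ) / f (g (kk m) : ℝ) ≤ Cc := by
      rw [div_le_iff₀ hDpos, hCc]
      have hpow : (2:ℝ)^(m+1) = 2 * (2:ℝ)^m := by ring
      nlinarith [Nat.cast_nonneg (α := ℝ) n, pow_pos (two_pos (α := ℝ)) m]
    exact le_trans hkey (le_trans (le_max_right _ _) (le_max_right _ _))
end
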